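/- arXiv:1803.03985 — 12 statements merged into one kernel-verified Lean document; each statement's English description precedes it below -/
import Mathlib

section
/- Let Ω ⊂ ℝ³ be a bounded convex domain with C¹ boundary, let x, y ∈ Ω, ζ ∈ ℝ³ nonzero, and set X = p(x,ζ), Y = p(y,ζ) the backward exit points. If |x - X| ≤ |y - Y|, then |X - Y| ≤ |x - y| / N(x,ζ), where N(x,ζ) = |n(X)·ζ|/|ζ|. -/
open scoped RealInnerProductSpace

/-- Auxiliary: if `u ⟂ n`, `‖n‖ = 1`, `ζ ≠ 0`, then for any `T`,
`(|⟪n,ζ⟫|/‖ζ‖) * ‖u‖ ≤ ‖u - T • ζ‖`. -/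
lemma exit_aux (n ζ u : EuclideanSpace ℝ (Fin 3)) (hn : ‖n‖ = 1) (hζ : ζ ≠ 0)
    (hu : ⟪u, n⟫ = 0) (T : ℝ) :
    (|⟪n, ζ⟫| / ‖ζ‖) * ‖u‖ ≤ ‖u - T • ζ‖ := by
  have hζ0 : (0:ℝ) < ‖ζ‖ := norm_pos_iff.mpr hζ
  set c : ℝ := ⟪ζ, n⟫ with hc
  have hcn : ⟪n, ζ⟫ = c := real_inner_comm ζ n
  -- ‖ζ - c • n‖² = ‖ζ‖² - c²
  have h2 : ‖ζ - c • n‖ ^ 2 = ‖ζ‖ ^ 2 - c ^ 2 := by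
    rw [norm_sub_sq_real, real_inner_smul_right, norm_smul, Real.norm_eq_abs, hn]
    rw [← hc]
    ring_nf
    rw [sq_abs]
    ring
  -- ⟪u, ζ⟫ = ⟪u, ζ - c • n⟫
  have h1 : ⟪u, ζ⟫ = ⟪u, ζ - c • n⟫ := by
    rw [inner_sub_right, real_inner_smul_right, hu]; ring
  have h3 : |⟪u, ζ - c • n⟫| ≤ ‖u‖ * ‖ζ - c • n‖ := abs_real_inner_le_norm _ _
  have h4 : ‖u - T • ζ‖ ^ 2 = ‖u‖ ^ 2 - 2 * (T * ⟪u, ζ⟫) + T ^ 2 * ‖ζ‖ ^ 2 := by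
    rw [norm_sub_sq_real, real_inner_smul_right, norm_smul, Real.norm_eq_abs]
    rw [mul_pow, sq_abs]
  -- squared inequality
  have h2P : ‖ζ - c • n‖ ^ 2 * ‖u‖ ^ 2 = (‖ζ‖ ^ 2 - c ^ 2) * ‖u‖ ^ 2 := by rw [h2]
  have hI2 : ⟪u, ζ⟫ ^ 2 ≤ (‖u‖ * ‖ζ - c • n‖) ^ 2 := by
    rw [h1, ← sq_abs]
    exact pow_le_pow_left₀ (abs_nonneg _) h3 2
  have hcabs : (|c| * ‖u‖) ^ 2 = c ^ 2 * ‖u‖ ^ 2 := by rw [mul_pow, sq_abs]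
  have hsq : (|⟪n, ζ⟫| / ‖ζ‖ * ‖u‖) ^ 2 ≤ ‖u - T • ζ‖ ^ 2 := by
    rw [hcn, div_mul_eq_mul_div, div_pow, div_le_iff₀ (by positivity), h4]
    nlinarith [sq_nonneg (T * ‖ζ‖ ^ 2 - ⟪u, ζ⟫), hI2, h2P, hcabs]
  have h5 : 0 ≤ |⟪n, ζ⟫| / ‖ζ‖ * ‖u‖ := by positivity
  have := Real.sqrt_le_sqrt hsq
  rwa [Real.sqrt_sq h5, Real.sqrt_sq (norm_nonneg _)] at this

/-- For a bounded convex domain `Ω ⊂ ℝ³` with `C¹` boundary, points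
`x, y ∈ Ω`, `ζ ≠ 0`, and backward exit points `X = p(x,ζ)`, `Y = p(y,ζ)`:
if `|x - X| ≤ |y - Y|` then `|X - Y| ≤ |x - y| / N(x,ζ)`, where
`N(x,ζ) = |n(X)·ζ|/‖ζ‖` and `n(X)` is the outward unit normal at `X`. -/
theorem exit_point_dist_le
    (Ω : Set (EuclideanSpace ℝ (Fin 3)))
    (hopen : IsOpen Ω) (hbdd : Bornology.IsBounded Ω) (hconv : Convex ℝ Ω)
    (x y ζ : EuclideanSpace ℝ (Fin 3)) (hx : x ∈ Ω) (hy : y ∈ Ω) (hζ : ζ ≠ 0)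
    (τx : ℝ) (hτx : τx = sInf {t : ℝ | 0 < t ∧ x - t • ζ ∉ Ω})
    (τy : ℝ) (hτy : τy = sInf {t : ℝ | 0 < t ∧ y - t • ζ ∉ Ω})
    (X : EuclideanSpace ℝ (Fin 3)) (hX : X = x - τx • ζ) (hXbd : X ∈ frontier Ω)
    (Y : EuclideanSpace ℝ (Fin 3)) (hY : Y = y - τy • ζ) (hYbd : Y ∈ frontier Ω)
    (n : EuclideanSpace ℝ (Fin 3)) (hn : ‖n‖ = 1)
    (hsupp : ∀ z ∈ Ω, ⟪z - X, n⟫ ≤ 0)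
    (N : ℝ) (hN : N = |⟪n, ζ⟫| / ‖ζ‖) (hNpos : 0 < N)
    (hord : ‖x - X‖ ≤ ‖y - Y‖) :
    ‖X - Y‖ ≤ ‖x - y‖ / N := by
  have hζ0 : (0:ℝ) < ‖ζ‖ := norm_pos_iff.mpr hζ
  set c : ℝ := ⟪ζ, n⟫ with hc
  have hcn : ⟪n, ζ⟫ = c := real_inner_comm ζ n
  -- τx, τy ≥ 0
  have hτxnn : 0 ≤ τx := by
    rw [hτx]; exact Real.sInf_nonneg fun t ht => ht.1.le
  have hτynn : 0 ≤ τy := by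
    rw [hτy]; exact Real.sInf_nonneg fun t ht => ht.1.le
  -- X ∉ Ω, so x ≠ X, so τx > 0
  have hXnot : X ∉ Ω := by
    rw [hopen.frontier_eq] at hXbd; exact hXbd.2
  have hτxpos : 0 < τx := by
    rcases hτxnn.lt_or_eq with h | h
    · exact h
    · exfalso; apply hXnot; rw [hX, ← h, zero_smul, sub_zero]; exact hx
  -- c < 0
  have hxX : x - X = τx • ζ := by rw [hX]; abel
  have hcx : τx * c ≤ 0 := by
    have := hsupp x hx
    rwa [hxX, real_inner_smul_left] at this
  have hcle : c ≤ 0 := by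
    by_contra h
    push_neg at h
    nlinarith [mul_pos hτxpos h]
  have hcne : c ≠ 0 := by
    intro h
    rw [hN, hcn, h] at hNpos
    simp at hNpos
  have hcneg : c < 0 := hcle.lt_of_ne hcne
  -- t := τy - τx ≥ 0
  have hnx : ‖x - X‖ = τx * ‖ζ‖ := by
    rw [hxX, norm_smul, Real.norm_eq_abs, abs_of_nonneg hτxnn]
  have hyY : y - Y = τy • ζ := by rw [hY]; abel
  have hny : ‖y - Y‖ = τy * ‖ζ‖ := by
    rw [hyY, norm_smul, Real.norm_eq_abs, abs_of_nonneg hτynn]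
  have htnn : 0 ≤ τy - τx := by
    rw [hnx, hny] at hord
    have := le_of_mul_le_mul_right (by linarith : τx * ‖ζ‖ ≤ τy * ‖ζ‖) hζ0
    linarith
  set t : ℝ := τy - τx with htdef
  -- supporting halfplane extends to closure
  have hYcl : Y ∈ closure Ω := frontier_subset_closure hYbd
  have hbY : ⟪Y - X, n⟫ ≤ 0 := by
    have hsub : Ω ⊆ {z | ⟪z - X, n⟫ ≤ 0} := hsupp
    have hcl : IsClosed {z : EuclideanSpace ℝ (Fin 3) | ⟪z - X, n⟫ ≤ 0} := by
      apply isClosed_le _ continuous_const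
      exact Continuous.inner (continuous_id.sub continuous_const) continuous_const
    exact closure_minimal hsub hcl hYcl
  set b : ℝ := ⟪X - Y, n⟫ with hbdef
  have hbnn : 0 ≤ b := by
    have : ⟪X - Y, n⟫ = -⟪Y - X, n⟫ := by
      rw [← inner_neg_left]; congr 1; abel
    rw [hbdef, this]; linarith
  set v : EuclideanSpace ℝ (Fin 3) := x - y with hvdef
  have hw : X - Y = v + t • ζ := by
    rw [hX, hY, hvdef, htdef, sub_smul]; module
  have hvn : ⟪v, n⟫ = b - t * c := by
    have : v = (X - Y) - t • ζ := by rw [hw]; abel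
    rw [this, inner_sub_left, real_inner_smul_left, ← hbdef, ← hc]
  have hcneg' : -c ≠ 0 := by intro h; apply hcne; linarith [neg_eq_zero.mp h]
  set T : ℝ := b / (-c) + t with hTdef
  have hTv : ⟪v, n⟫ = T * (-c) := by
    rw [hvn, hTdef, add_mul, div_mul_cancel₀ _ hcneg']; ring
  have hTget : t ≤ T := by
    rw [hTdef]
    have : 0 ≤ b / (-c) := div_nonneg hbnn (by linarith)
    linarith
  have hTnn : 0 ≤ T := le_trans htnn hTget
  set u : EuclideanSpace ℝ (Fin 3) := v + T • ζ with hudef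
  have hun : ⟪u, n⟫ = 0 := by
    rw [hudef, inner_add_left, real_inner_smul_left, ← hc, hTv]
    ring
  have huv : u - T • ζ = v := by rw [hudef]; abel
  have hkey : N * ‖u‖ ≤ ‖v‖ := by
    have := exit_aux n ζ u hn hζ hun T
    rwa [huv, ← hN] at this
  have hNle1 : N ≤ 1 := by
    rw [hN]
    rw [div_le_one hζ0]
    calc |⟪n, ζ⟫| ≤ ‖n‖ * ‖ζ‖ := abs_real_inner_le_norm n ζ
      _ = ‖ζ‖ := by rw [hn, one_mul]
  have hvN : ‖v‖ ≤ ‖v‖ / N := by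
    rw [le_div_iff₀ hNpos]
    exact mul_le_of_le_one_right (norm_nonneg v) hNle1
  have huN : ‖u‖ ≤ ‖v‖ / N := by
    rw [le_div_iff₀ hNpos, mul_comm]
    exact hkey
  have hgoal : ‖X - Y‖ ≤ ‖v‖ / N := by
    rcases hTnn.lt_or_eq with hTpos | hT0
    · -- T > 0
      set θ : ℝ := t / T with hθdef
      have hθ0 : 0 ≤ θ := div_nonneg htnn hTnn
      have hθ1 : θ ≤ 1 := (div_le_one hTpos).mpr hTget
      have hθT : θ * T = t := by rw [hθdef]; field_simp
      have hcomb : X - Y = (1 - θ) • v + θ • u := by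
        rw [hw, hudef, smul_add, smul_smul, hθT]; module
      calc ‖X - Y‖ = ‖(1 - θ) • v + θ • u‖ := by rw [hcomb]
        _ ≤ ‖(1 - θ) • v‖ + ‖θ • u‖ := norm_add_le _ _
        _ = (1 - θ) * ‖v‖ + θ * ‖u‖ := by
            rw [norm_smul, norm_smul, Real.norm_eq_abs, Real.norm_eq_abs,
              abs_of_nonneg (by linarith), abs_of_nonneg hθ0]
        _ ≤ (1 - θ) * (‖v‖ / N) + θ * (‖v‖ / N) := by
            gcongr <;> linarith
        _ = ‖v‖ / N := by ring
    · -- T = 0, then t = 0 and X - Y = v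
      have ht0 : t = 0 := le_antisymm (hT0 ▸ hTget) htnn
      rw [hw, ht0, zero_smul, add_zero]
      exact hvN
  rwa [hvdef] at hgoal
end

section
/- Let Ω ⊂ ℝ³ be a bounded convex domain with C¹ boundary, x, y ∈ Ω, ζ ∈ ℝ³ nonzero, X = p(x,ζ), Y = p(y,ζ). If |x - X| ≤ |y - Y|, then ||x - X| - |y - Y|| ≤ 2|x - y| / N(x,ζ). -/
open scoped RealInnerProductSpace

/-- For a bounded convex domain `Ω ⊂ ℝ³` with `C¹` boundary, points
`x, y ∈ Ω`, `ζ ≠ 0`, exit points `X = p(x,ζ)`, `Y = p(y,ζ)`: if `|x-X| ≤ |y-Y|`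
then `||x - X| - |y - Y|| ≤ 2|x - y| / N(x,ζ)`. -/
theorem exit_time_diff_le
    (Ω : Set (EuclideanSpace ℝ (Fin 3)))
    (hopen : IsOpen Ω) (hbdd : Bornology.IsBounded Ω) (hconv : Convex ℝ Ω)
    (x y ζ : EuclideanSpace ℝ (Fin 3)) (hx : x ∈ Ω) (hy : y ∈ Ω) (hζ : ζ ≠ 0)
    (τx : ℝ) (hτx : τx = sInf {t : ℝ | 0 < t ∧ x - t • ζ ∉ Ω})
    (τy : ℝ) (hτy : τy = sInf {t : ℝ | 0 < t ∧ y - t • ζ ∉ Ω})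
    (X : EuclideanSpace ℝ (Fin 3)) (hX : X = x - τx • ζ) (hXbd : X ∈ frontier Ω)
    (Y : EuclideanSpace ℝ (Fin 3)) (hY : Y = y - τy • ζ) (hYbd : Y ∈ frontier Ω)
    (n : EuclideanSpace ℝ (Fin 3)) (hn : ‖n‖ = 1)
    (hsupp : ∀ z ∈ Ω, ⟪z - X, n⟫ ≤ 0)
    (N : ℝ) (hN : N = |⟪n, ζ⟫| / ‖ζ‖) (hNpos : 0 < N)
    (hord : ‖x - X‖ ≤ ‖y - Y‖) :
    |‖x - X‖ - ‖y - Y‖| ≤ 2 * ‖x - y‖ / N := by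
  have hζn : (0:ℝ) < ‖ζ‖ := norm_pos_iff.mpr hζ
  obtain ⟨R, hR⟩ := hbdd.subset_closedBall 0
  -- positivity of exit times
  have hτpos : ∀ z ∈ Ω, 0 < sInf {t : ℝ | 0 < t ∧ z - t • ζ ∉ Ω} := by
    intro z hz
    obtain ⟨ε, hε, hball⟩ := Metric.isOpen_iff.mp hopen z hz
    have hRz : dist z 0 ≤ R := hR hz
    have hne : {t : ℝ | 0 < t ∧ z - t • ζ ∉ Ω}.Nonempty := by
      have hR0 : (0:ℝ) ≤ R := le_trans dist_nonneg hRz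
      have hpos : (0:ℝ) < (R + ‖z‖ + 1)/‖ζ‖ :=
        div_pos (by linarith [norm_nonneg z]) hζn
      refine ⟨(R + ‖z‖ + 1)/‖ζ‖, hpos, fun hmem => ?_⟩
      · have h1 : dist (z - ((R + ‖z‖ + 1)/‖ζ‖) • ζ) 0 ≤ R := hR hmem
        have h2 : ‖((R + ‖z‖ + 1)/‖ζ‖) • ζ‖ = R + ‖z‖ + 1 := by
          rw [norm_smul, Real.norm_eq_abs, abs_of_pos hpos]
          field_simp
        have h3 : ‖z - ((R + ‖z‖ + 1)/‖ζ‖) • ζ‖ ≥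
            ‖((R + ‖z‖ + 1)/‖ζ‖) • ζ‖ - ‖z‖ := by
          have := norm_sub_norm_le (((R + ‖z‖ + 1)/‖ζ‖) • ζ) z
          have h4 : ‖((R + ‖z‖ + 1)/‖ζ‖) • ζ - z‖ = ‖z - ((R + ‖z‖ + 1)/‖ζ‖) • ζ‖ :=
            norm_sub_rev _ _
          linarith
        rw [dist_zero_right] at h1
        rw [h2] at h3
        linarith
    have hlb : ε/‖ζ‖ ≤ sInf {t : ℝ | 0 < t ∧ z - t • ζ ∉ Ω} := by
      refine le_csInf hne ?_
      rintro t ⟨ht, htΩ⟩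
      by_contra hlt
      push_neg at hlt
      apply htΩ
      apply hball
      rw [Metric.mem_ball, dist_eq_norm]
      have : z - t • ζ - z = -(t • ζ) := by abel
      rw [this, norm_neg, norm_smul, Real.norm_eq_abs, abs_of_pos ht]
      calc t * ‖ζ‖ < (ε/‖ζ‖) * ‖ζ‖ := by exact mul_lt_mul_of_pos_right hlt hζn
        _ = ε := by field_simp
    have : (0:ℝ) < ε/‖ζ‖ := by positivity
    linarith
  have hτxpos : 0 < τx := hτx ▸ hτpos x hx
  have hτypos : 0 < τy := hτy ▸ hτpos y hy
  -- set c = ⟪ζ, n⟫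
  set c : ℝ := ⟪ζ, n⟫ with hc
  have hxX : x - X = τx • ζ := by rw [hX]; abel
  have hyY : y - Y = τy • ζ := by rw [hY]; abel
  have hcn : ⟪n, ζ⟫ = c := real_inner_comm ζ n
  have hcle : τx * c ≤ 0 := by
    have := hsupp x hx
    rwa [hxX, real_inner_smul_left] at this
  have hcne : c ≠ 0 := by
    intro h
    rw [hN, hcn, h] at hNpos
    simp at hNpos
  have hcneg : c < 0 := by
    rcases lt_or_gt_of_ne hcne with h | h
    · exact h
    · nlinarith
  -- Y in closure, supporting inequality at Y
  have hYcl : Y ∈ closure Ω := frontier_subset_closure hYbd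
  have hsuppY : ⟪Y - X, n⟫ ≤ 0 := by
    have hclosed : IsClosed {z : EuclideanSpace ℝ (Fin 3) | ⟪z - X, n⟫ ≤ 0} := by
      apply isClosed_le _ continuous_const
      exact Continuous.inner (continuous_id.sub continuous_const) continuous_const
    exact hclosed.closure_subset_iff.mpr (fun z hz => hsupp z hz) hYcl
  -- key inequality
  have hYX : Y - X = (y - x) + (τx - τy) • ζ := by rw [hX, hY]; module
  have hkey : ⟪y - x, n⟫ + (τx - τy) * c ≤ 0 := by
    rw [hYX, inner_add_left, real_inner_smul_left] at hsuppY
    exact hsuppY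
  have hCS : |⟪y - x, n⟫| ≤ ‖x - y‖ := by
    calc |⟪y - x, n⟫| ≤ ‖y - x‖ * ‖n‖ := abs_real_inner_le_norm _ _
      _ = ‖x - y‖ := by rw [hn, mul_one, norm_sub_rev]
  have hmain : (τy - τx) * (-c) ≤ ‖x - y‖ := by
    have h1 : (τx - τy) * c ≤ -⟪y - x, n⟫ := by linarith
    have h2 : -⟪y - x, n⟫ ≤ |⟪y - x, n⟫| := neg_le_abs _
    nlinarith [hCS]
  -- rewrite norms
  have hnx : ‖x - X‖ = τx * ‖ζ‖ := by
    rw [hxX, norm_smul, Real.norm_eq_abs, abs_of_pos hτxpos]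
  have hny : ‖y - Y‖ = τy * ‖ζ‖ := by
    rw [hyY, norm_smul, Real.norm_eq_abs, abs_of_pos hτypos]
  rw [hnx, hny] at hord ⊢
  rw [hN, hcn, abs_of_neg hcneg]
  rw [abs_of_nonpos (by linarith)]
  rw [div_div_eq_mul_div, le_div_iff₀ (by linarith : (0:ℝ) < -c)]
  have hτyx : τx ≤ τy := le_of_mul_le_mul_right (by linarith) hζn
  nlinarith [norm_nonneg (x - y), hmain, hζn]
end

section
/- Let Ω ⊂ ℝ³ be a bounded strictly convex C² domain whose boundary has positive Gaussian curvature. There exists a constant C > 0, depending only on Ω, such that for every interior point x ∈ Ω, ∫_{∂Ω} |x - y|^{-2} dA(y) ≤ C(|ln d(x,∂Ω)| + 1), where dA is the surface measure on ∂Ω. -/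
/-!
For a convex body `K` inside a closed ball, the metric projection onto `K` is `1`-Lipschitz and
maps the bounding sphere onto `∂K`. Applied to `K = closure Ω ∩ B(x, r)`, the area of `∂Ω` inside
any ball of radius `r` is at most that of a sphere of radius `r`, i.e. `O(r²)`. Splitting `∂Ω` into the dyadic shells
`d·2^k ≤ |x - y| < d·2^(k+1)` around `x`, with `d = d(x, ∂Ω)`, each shell contributes `O(1)` to
the integral of `|x - y|⁻²`, and there are `O(|ln d| + 1)` shells before the diameter of `Ω` is
reached.
-/

open MeasureTheory Metric Set Real
open scoped RealInnerProductSpace ENNReal NNReal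

variable {F : Type*} [NormedAddCommGroup F] [InnerProductSpace ℝ F]

def IsMetricProjection (K : Set F) (P : F → F) : Prop :=
  ∀ u, P u ∈ K ∧ ∀ w ∈ K, ⟪u - P u, w - P u⟫ ≤ 0

theorem exists_isMetricProjection [CompleteSpace F] {K : Set F} (hK : Convex ℝ K)
    (hKc : IsClosed K) (hne : K.Nonempty) : ∃ P, IsMetricProjection K P := by
  choose P hP using fun u ↦ exists_norm_eq_iInf_of_complete_convex hne hKc.isComplete hK u
  exact ⟨P, fun u ↦ ⟨(hP u).1, (norm_eq_iInf_iff_real_inner_le_zero hK (hP u).1).1 (hP u).2⟩⟩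

namespace IsMetricProjection

variable {K : Set F} {P : F → F}

theorem eq_of_inner_le_zero (hP : IsMetricProjection K P) {u p : F} (hp : p ∈ K)
    (h : ∀ w ∈ K, ⟪u - p, w - p⟫ ≤ 0) : P u = p := by
  obtain ⟨hPu, hvar⟩ := hP u
  have hsplit : ⟪P u - p, P u - p⟫ = ⟪u - p, P u - p⟫ + ⟪u - P u, p - P u⟫ := by
    simp only [inner_sub_left, inner_sub_right]; ring
  have hnonpos : ⟪P u - p, P u - p⟫ ≤ 0 := by linarith [h _ hPu, hvar p hp]
  exact sub_eq_zero.1 (real_inner_self_nonpos.1 hnonpos)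

theorem apply_of_mem (hP : IsMetricProjection K P) {q : F} (hq : q ∈ K) : P q = q :=
  hP.eq_of_inner_le_zero hq fun w _ ↦ by simp

theorem lipschitzWith_one (hP : IsMetricProjection K P) : LipschitzWith 1 P := by
  refine LipschitzWith.of_dist_le_mul fun u v ↦ ?_
  obtain ⟨hPu, hu⟩ := hP u
  obtain ⟨hPv, hv⟩ := hP v
  have hinner : ‖P u - P v‖ ^ 2 ≤ ⟪u - v, P u - P v⟫ := by
    have hsplit : ⟪P u - P v, P u - P v⟫ =
        ⟪u - v, P u - P v⟫ + ⟪v - P v, P u - P v⟫ + ⟪u - P u, P v - P u⟫ := by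
      simp only [inner_sub_left, inner_sub_right]; ring
    rw [← real_inner_self_eq_norm_sq]
    linarith [hu _ hPv, hv _ hPu]
  have := hinner.trans (real_inner_le_norm _ _)
  rw [NNReal.coe_one, one_mul, dist_eq_norm, dist_eq_norm]
  nlinarith [norm_nonneg (P u - P v), norm_nonneg (u - v)]

/-- Points of the normal ray `P u + t • (u - P u)`, `t ≥ 0`, all project to `P u`, and the ray
leaves the ball through its sphere by the intermediate value theorem. -/
theorem exists_mem_sphere_apply_eq (hP : IsMetricProjection K P) {x : F} {r : ℝ}
    (hKr : K ⊆ closedBall x r) {u : F} (hu : u ∉ K) : ∃ s ∈ sphere x r, P s = P u := by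
  obtain ⟨hPu, hvar⟩ := hP u
  set ν := u - P u
  have hν : 0 < ‖ν‖ := norm_pos_iff.2 (sub_ne_zero.2 fun h ↦ hu (h ▸ hPu))
  have hPur : dist (P u) x ≤ r := hKr hPu
  have hr : 0 ≤ r := dist_nonneg.trans hPur
  have hcont : Continuous fun t : ℝ ↦ dist (P u + t • ν) x := by fun_prop
  have hfar : r ≤ dist (P u + (2 * r / ‖ν‖) • ν) x := by
    have := norm_sub_norm_le ((2 * r / ‖ν‖) • ν) (x - P u)
    rw [norm_smul, Real.norm_of_nonneg (by positivity), div_mul_cancel₀ _ hν.ne',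
      ← dist_eq_norm'] at this
    rw [dist_eq_norm, show P u + (2 * r / ‖ν‖) • ν - x = (2 * r / ‖ν‖) • ν - (x - P u) by abel]
    linarith [dist_comm x (P u)]
  obtain ⟨t, ht, hts⟩ := intermediate_value_Icc (by positivity) hcont.continuousOn
    ⟨by simpa using hPur, hfar⟩
  refine ⟨P u + t • ν, hts, hP.eq_of_inner_le_zero hPu fun w hw ↦ ?_⟩
  rw [add_sub_cancel_left, real_inner_smul_left]
  exact mul_nonpos_of_nonneg_of_nonpos ht.1 (hvar w hw)

theorem frontier_subset_image_sphere [ProperSpace F] (hP : IsMetricProjection K P)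
    (hKc : IsClosed K) {x : F} {r : ℝ} (hKr : K ⊆ closedBall x r) :
    frontier K ⊆ P '' sphere x r := by
  have hcont := hP.lipschitzWith_one.continuous
  have himage : P '' Kᶜ ⊆ P '' sphere x r := by
    rintro _ ⟨u, hu, rfl⟩
    obtain ⟨s, hs, hsu⟩ := hP.exists_mem_sphere_apply_eq hKr hu
    exact ⟨s, hs, hsu⟩
  intro q hq
  rw [← hP.apply_of_mem (hKc.frontier_subset hq)]
  have hqc : q ∈ closure Kᶜ := frontier_subset_closure (by rwa [frontier_compl])
  have : P q ∈ closure (P '' Kᶜ) := image_closure_subset_closure_image hcont ⟨q, hqc, rfl⟩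
  exact ((isCompact_sphere x r).image hcont).isClosed.closure_subset_iff.2 himage this

end IsMetricProjection

theorem Convex.hausdorffMeasure_frontier_le_sphere [ProperSpace F] [MeasurableSpace F]
    [BorelSpace F] {K : Set F} (hK : Convex ℝ K) (hKc : IsClosed K) {x : F} {r : ℝ}
    (hKr : K ⊆ closedBall x r) {d : ℝ} (hd : 0 ≤ d) :
    μH[d] (frontier K) ≤ μH[d] (sphere x r) := by
  rcases K.eq_empty_or_nonempty with rfl | hne
  · simp
  obtain ⟨P, hP⟩ := exists_isMetricProjection hK hKc hne
  calc μH[d] (frontier K) ≤ μH[d] (P '' sphere x r) :=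
        measure_mono (hP.frontier_subset_image_sphere hKc hKr)
    _ ≤ (1 : ℝ≥0) ^ d * μH[d] (sphere x r) := hP.lipschitzWith_one.hausdorffMeasure_image_le hd _
    _ = μH[d] (sphere x r) := by simp

theorem Convex.hausdorffMeasure_frontier_inter_closedBall_le [ProperSpace F] [MeasurableSpace F]
    [BorelSpace F] {Ω : Set F} (hΩ : Convex ℝ Ω) (hΩo : IsOpen Ω) (x : F) (r : ℝ) {d : ℝ}
    (hd : 0 ≤ d) : μH[d] (frontier Ω ∩ closedBall x r) ≤ μH[d] (sphere x r) := by
  rcases Ω.eq_empty_or_nonempty with rfl | hne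
  · simp
  have hKc : IsClosed (closure Ω ∩ closedBall x r) := isClosed_closure.inter isClosed_closedBall
  refine le_trans (measure_mono ?_) <| (hΩ.closure.inter (convex_closedBall x r))
    |>.hausdorffMeasure_frontier_le_sphere hKc inter_subset_right hd
  rintro y ⟨hyΩ, hyr⟩
  rw [hKc.frontier_eq]
  refine ⟨⟨frontier_subset_closure hyΩ, hyr⟩, fun hyint ↦ ?_⟩
  have : y ∈ interior (closure Ω) := interior_mono inter_subset_left hyint
  rw [hΩ.interior_closure_eq_interior_of_nonempty_interior (by rwa [hΩo.interior_eq]),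
    hΩo.interior_eq] at this
  exact (hΩo.frontier_eq ▸ hyΩ).2 this

noncomputable def sphericalCoords (θ φ : ℝ) : EuclideanSpace ℝ (Fin 3) :=
  !₂[cos θ * sin φ, sin θ * sin φ, cos φ]

theorem sq_cos_sub_cos_add_sq_sin_sub_sin_le (a b : ℝ) :
    (cos a - cos b) ^ 2 + (sin a - sin b) ^ 2 ≤ (a - b) ^ 2 := by
  nlinarith [sin_sq_add_cos_sq a, sin_sq_add_cos_sq b, cos_sub a b,
    one_sub_sq_div_two_le_cos (x := a - b)]

theorem dist_sphericalCoords_le (θ φ θ' φ' : ℝ) :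
    dist (sphericalCoords θ φ) (sphericalCoords θ' φ') ≤ |θ - θ'| + |φ - φ'| := by
  have hθ : dist (sphericalCoords θ φ) (sphericalCoords θ' φ) ≤ |θ - θ'| := by
    rw [EuclideanSpace.dist_eq, ← sqrt_sq_eq_abs]
    refine sqrt_le_sqrt ?_
    simp only [sphericalCoords, Real.dist_eq, sq_abs, Fin.sum_univ_three, Matrix.cons_val_zero,
      Matrix.cons_val_one, Matrix.cons_val, sub_self, ne_eq, OfNat.ofNat_ne_zero,
      not_false_eq_true, zero_pow, add_zero]
    nlinarith [sq_cos_sub_cos_add_sq_sin_sub_sin_le θ θ', sin_sq_le_one φ]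
  have hφ : dist (sphericalCoords θ' φ) (sphericalCoords θ' φ') ≤ |φ - φ'| := by
    rw [EuclideanSpace.dist_eq, ← sqrt_sq_eq_abs]
    refine sqrt_le_sqrt ?_
    simp only [sphericalCoords, Real.dist_eq, sq_abs, Fin.sum_univ_three, Matrix.cons_val_zero,
      Matrix.cons_val_one, Matrix.cons_val]
    nlinarith [sq_cos_sub_cos_add_sq_sin_sub_sin_le φ φ', sin_sq_add_cos_sq θ']
  exact (dist_triangle _ _ _).trans (add_le_add hθ hφ)

theorem exists_sphericalCoords_eq {w : EuclideanSpace ℝ (Fin 3)} (hw : ‖w‖ = 1) :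
    ∃ θ ∈ Icc (-π) π, ∃ φ ∈ Icc 0 π, sphericalCoords θ φ = w := by
  have hsum : w 0 ^ 2 + w 1 ^ 2 + w 2 ^ 2 = 1 := by
    have := EuclideanSpace.norm_eq w
    rw [hw, Fin.sum_univ_three] at this
    simpa [sq_abs] using (sqrt_eq_one.1 this.symm)
  set c : ℂ := ⟨w 0, w 1⟩
  have hc : ‖c‖ = sin (arccos (w 2)) := by
    rw [sin_arccos, Complex.norm_eq_sqrt_sq_add_sq]
    congr 1
    linarith
  have hw2 : w 2 ∈ Icc (-1) 1 := by
    constructor <;> nlinarith [sq_nonneg (w 0), sq_nonneg (w 1)]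
  refine ⟨c.arg, ⟨(Complex.neg_pi_lt_arg c).le, Complex.arg_le_pi c⟩,
    arccos (w 2), ⟨arccos_nonneg _, arccos_le_pi _⟩, ?_⟩
  ext i
  fin_cases i
  · simp [sphericalCoords, ← hc, mul_comm, Complex.norm_mul_cos_arg, c]
  · simp [sphericalCoords, ← hc, mul_comm, Complex.norm_mul_sin_arg, c]
  · simp [sphericalCoords, cos_arccos hw2.1 hw2.2]

theorem hausdorffMeasure_sphere_le (x : EuclideanSpace ℝ (Fin 3)) {ρ : ℝ} (hρ : 0 ≤ ρ) :
    μH[2] (sphere x ρ) ≤ ENNReal.ofReal (8 * π ^ 2 * ρ ^ 2) := by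
  let g : (Fin 2 → ℝ) → EuclideanSpace ℝ (Fin 3) := fun p ↦ x + ρ • sphericalCoords (p 0) (p 1)
  have hg : LipschitzWith (2 * ρ).toNNReal g := by
    refine LipschitzWith.of_dist_le_mul fun p q ↦ ?_
    have h0 := dist_le_pi_dist p q 0
    have h1 := dist_le_pi_dist p q 1
    rw [Real.dist_eq] at h0 h1
    rw [Real.coe_toNNReal _ (by positivity), dist_add_left, dist_smul₀, Real.norm_of_nonneg hρ]
    nlinarith [dist_sphericalCoords_le (p 0) (p 1) (q 0) (q 1), dist_nonneg (x := p) (y := q)]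
  have hsub : sphere x ρ ⊆ g '' Icc ![-π, 0] ![π, π] := by
    intro z hz
    rcases hρ.eq_or_lt with rfl | hρ
    · exact ⟨![0, 0], ⟨by intro i; fin_cases i <;> simp [pi_pos.le],
        by intro i; fin_cases i <;> simp [pi_pos.le]⟩, by simp_all [g]⟩
    have hw : ‖ρ⁻¹ • (z - x)‖ = 1 := by
      rw [norm_smul, ← dist_eq_norm, mem_sphere.1 hz, Real.norm_of_nonneg (by positivity),
        inv_mul_cancel₀ hρ.ne']
    obtain ⟨θ, hθ, φ, hφ, hθφ⟩ := exists_sphericalCoords_eq hw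
    refine ⟨![θ, φ], ⟨?_, ?_⟩, ?_⟩
    · intro i; fin_cases i <;> simp [hθ.1, hφ.1]
    · intro i; fin_cases i <;> simp [hθ.2, hφ.2]
    · simp [g, hθφ, smul_smul, mul_inv_cancel₀ hρ.ne']
  have hvol : (μH[2] : Measure (Fin 2 → ℝ)) = volume := by
    simpa using hausdorffMeasure_pi_real (ι := Fin 2)
  calc μH[2] (sphere x ρ) ≤ μH[2] (g '' Icc ![-π, 0] ![π, π]) := measure_mono hsub
    _ ≤ ((2 * ρ).toNNReal : ℝ≥0∞) ^ (2 : ℝ) * μH[2] (Icc ![-π, 0] ![π, π]) :=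
      hg.hausdorffMeasure_image_le zero_le_two _
    _ = ENNReal.ofReal (8 * π ^ 2 * ρ ^ 2) := by
      rw [hvol, Real.volume_Icc_pi, Fin.prod_univ_two, ENNReal.rpow_two, ← ENNReal.ofReal.eq_def,
        ← ENNReal.ofReal_pow (by positivity), ← ENNReal.ofReal_mul (by simp [pi_pos.le]),
        ← ENNReal.ofReal_mul (by positivity)]
      congr 1
      simp only [Matrix.cons_val_zero, Matrix.cons_val_one, Matrix.cons_val_fin_one,
        sub_neg_eq_add, sub_zero]
      ring

theorem setLIntegral_ofReal_one_div_dist_sq_le {X : Type*} [PseudoMetricSpace X]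
    [MeasurableSpace X] [OpensMeasurableSpace X] (μ : Measure X) (s : Set X) (x : X)
    {c d : ℝ} {N : ℕ} (hd : 0 < d)
    (hball : ∀ r > 0, μ (s ∩ closedBall x r) ≤ ENNReal.ofReal (c * r ^ 2))
    (hs : ∀ y ∈ s, d ≤ dist x y ∧ dist x y < d * 2 ^ N) :
    ∫⁻ y in s, ENNReal.ofReal (1 / dist x y ^ 2) ∂μ ≤ N * ENNReal.ofReal (4 * c) := by
  set shell : ℕ → X → ℝ≥0∞ := fun k ↦
    (closedBall x (d * 2 ^ (k + 1))).indicator fun _ ↦ ENNReal.ofReal (1 / (d * 2 ^ k) ^ 2)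
  have hmeas (k : ℕ) : MeasurableSet (closedBall x (d * 2 ^ (k + 1))) := measurableSet_closedBall
  have hshell : ∀ y ∈ s,
      ENNReal.ofReal (1 / dist x y ^ 2) ≤ ∑ k ∈ Finset.range N, shell k y := by
    intro y hy
    obtain ⟨hdy, hyN⟩ := hs y hy
    obtain ⟨j, hjy, hyj⟩ := exists_nat_pow_near ((one_le_div hd).2 hdy) one_lt_two
    rw [le_div_iff₀' hd] at hjy
    rw [div_lt_iff₀' hd] at hyj
    have hjN : j < N := (pow_lt_pow_iff_right₀ (one_lt_two (α := ℝ))).1 <|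
      (mul_lt_mul_iff_right₀ hd).1 (hjy.trans_lt hyN)
    refine le_trans ?_ (Finset.single_le_sum (fun _ _ ↦ zero_le) (Finset.mem_range.2 hjN))
    simp only [shell, indicator_of_mem (mem_closedBall'.2 hyj.le)]
    gcongr
  calc ∫⁻ y in s, ENNReal.ofReal (1 / dist x y ^ 2) ∂μ
      ≤ ∫⁻ y in s, ∑ k ∈ Finset.range N, shell k y ∂μ :=
        setLIntegral_mono (Finset.measurable_sum _ fun k _ ↦ measurable_const.indicator (hmeas k))
          hshell
    _ = ∑ k ∈ Finset.range N, ENNReal.ofReal (1 / (d * 2 ^ k) ^ 2) *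
          μ (s ∩ closedBall x (d * 2 ^ (k + 1))) := by
        rw [lintegral_finsetSum _ fun k _ ↦ measurable_const.indicator (hmeas k)]
        simp only [lintegral_indicator_const (hmeas _), Measure.restrict_apply (hmeas _),
          inter_comm]
    _ ≤ ∑ _k ∈ Finset.range N, ENNReal.ofReal (4 * c) := by
        refine Finset.sum_le_sum fun k _ ↦ ?_
        grw [hball _ (by positivity), ← ENNReal.ofReal_mul (by positivity)]
        apply le_of_eq
        congr 1
        field_simp
        ring
    _ = N * ENNReal.ofReal (4 * c) := by simp

theorem natCast_add_one_le_mul_of_two_pow_le {N : ℕ} {d D : ℝ} (hd : 0 < d)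
    (hN : 2 ^ N ≤ D / d) :
    (N : ℝ) + 1 ≤ (2 * |log D| + 2) * (|log d| + 1) := by
  have hD : 0 < D := (div_pos_iff_of_pos_right hd).1 (lt_of_lt_of_le (by positivity) hN)
  have hlog : N * log 2 ≤ log D - log d := by
    rw [← log_pow, ← log_div hD.ne' hd.ne']
    exact log_le_log (by positivity) (by exact_mod_cast hN)
  nlinarith [log_two_gt_d9, le_abs_self (log D), neg_abs_le (log d), abs_nonneg (log D),
    abs_nonneg (log d), mul_nonneg (abs_nonneg (log D)) (abs_nonneg (log d))]

theorem boundary_inverse_square_integral_log_bound_general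
    (Ω : Set (EuclideanSpace ℝ (Fin 3)))
    (hopen : IsOpen Ω) (hbdd : Bornology.IsBounded Ω) (hconv : StrictConvex ℝ Ω) :
    ∃ C > 0, ∀ x ∈ Ω,
      ∫⁻ y in frontier Ω, ENNReal.ofReal (1 / dist x y ^ 2) ∂(μH[2]) ≤
        ENNReal.ofReal (C * (|Real.log (Metric.infDist x (frontier Ω))| + 1)) := by
  set D := diam Ω + 1
  refine ⟨32 * π ^ 2 * (2 * |log D| + 2), by positivity, fun x hx ↦ ?_⟩
  rcases (frontier Ω).eq_empty_or_nonempty with hempty | ⟨y₀, hy₀⟩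
  · simp [hempty]
  set d := infDist x (frontier Ω)
  have hd : 0 < d := (isClosed_frontier.notMem_iff_infDist_pos ⟨y₀, hy₀⟩).1
    fun h ↦ (hopen.frontier_eq ▸ h).2 hx
  have hshell : ∀ y ∈ frontier Ω, d ≤ dist x y ∧ dist x y < D := fun y hy ↦
    ⟨infDist_le_dist_of_mem hy, by
      have := dist_le_diam_of_mem hbdd.closure (subset_closure hx) (frontier_subset_closure hy)
      rw [diam_closure] at this
      linarith⟩
  have hdD : 1 ≤ D / d := (one_le_div hd).2 ((hshell y₀ hy₀).1.trans (hshell y₀ hy₀).2.le)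
  obtain ⟨N, hN, hND⟩ := exists_nat_pow_near hdD one_lt_two
  have hball (r : ℝ) (hr : 0 < r) :
      μH[2] (frontier Ω ∩ closedBall x r) ≤ ENNReal.ofReal (8 * π ^ 2 * r ^ 2) :=
    (hconv.convex.hausdorffMeasure_frontier_inter_closedBall_le hopen x r zero_le_two).trans
      (hausdorffMeasure_sphere_le x hr.le)
  calc ∫⁻ y in frontier Ω, ENNReal.ofReal (1 / dist x y ^ 2) ∂(μH[2])
      ≤ ((N + 1 : ℕ) : ℝ≥0∞) * ENNReal.ofReal (4 * (8 * π ^ 2)) :=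
        setLIntegral_ofReal_one_div_dist_sq_le _ _ x hd hball fun y hy ↦
          ⟨(hshell y hy).1, (hshell y hy).2.trans ((div_lt_iff₀' hd).1 hND)⟩
    _ ≤ ENNReal.ofReal (32 * π ^ 2 * (2 * |log D| + 2) * (|log d| + 1)) := by
        rw [← ENNReal.ofReal_natCast, ← ENNReal.ofReal_mul (by positivity)]
        refine ENNReal.ofReal_le_ofReal ?_
        have := natCast_add_one_le_mul_of_two_pow_le hd hN
        push_cast
        nlinarith [pi_pos]

/-- For a bounded strictly convex `C²` domain `Ω ⊂ ℝ³` whose boundary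
has positive Gaussian curvature (encoded by uniform interior and exterior tangent
balls at every boundary point), there is `C > 0`, depending only on `Ω`, such that
for every `x ∈ Ω`: `∫_{∂Ω} |x-y|⁻² dA(y) ≤ C(|ln d(x,∂Ω)| + 1)`, where `dA` is the
two-dimensional Hausdorff (surface) measure on `∂Ω`. -/
theorem boundary_inverse_square_integral_log_bound
    (Ω : Set (EuclideanSpace ℝ (Fin 3)))
    (hopen : IsOpen Ω) (hbdd : Bornology.IsBounded Ω) (hconv : StrictConvex ℝ Ω)
    (hne : Ω.Nonempty)
    (R₂ R₃ : ℝ) (hR₂ : 0 < R₂) (hR₂₃ : R₂ ≤ R₃)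
    (hballs : ∀ p ∈ frontier Ω, ∃ ci co : EuclideanSpace ℝ (Fin 3),
      Metric.closedBall ci R₂ ⊆ closure Ω ∧ closure Ω ⊆ Metric.closedBall co R₃ ∧
      dist p ci = R₂ ∧ dist p co = R₃) :
    ∃ C > 0, ∀ x ∈ Ω,
      ∫⁻ y in frontier Ω, ENNReal.ofReal (1 / dist x y ^ 2) ∂(μH[2]) ≤
        ENNReal.ofReal (C * (|Real.log (Metric.infDist x (frontier Ω))| + 1)) :=
  boundary_inverse_square_integral_log_bound_general Ω hopen hbdd hconv
end

section
/- Let φ : [0, r] → ℝ³ be a C² unit-speed curve with φ(0) = p₀ = (0,0,0), φ'(0) = (1,0,0), curvature bound |φ''(s)| ≤ b, and r ≤ 1/(4b). Let x = (0,0,-d) with 0 ≤ d ≤ r. Then for every s ∈ [0, r], |x - p₀|² + (1/2)s² ≤ |φ(s) - x|². -/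
/-!
Taylor's formula with the curvature bound puts `φ s` within `b s² / 2` of `s • φ' 0`, which is a
unit vector orthogonal to `x`. Hence `‖φ s‖ ≥ s - b s² / 2` and `⟪φ s, x⟫ ≤ (b s² / 2) ‖x‖`, and
expanding `‖φ s - x‖²` loses at most `s² / 2` against `‖x‖² + s²` once `b s ≤ 1/4` and `b d ≤ 1/4`.
-/

open Set

theorem norm_sub_sub_smul_le_of_norm_deriv2_le {E : Type*} [NormedAddCommGroup E] [NormedSpace ℝ E]
    {f f' f'' : ℝ → E} {a c b : ℝ}
    (hf : ∀ t ∈ Icc a c, HasDerivWithinAt f (f' t) (Icc a c) t)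
    (hf' : ∀ t ∈ Icc a c, HasDerivWithinAt f' (f'' t) (Icc a c) t)
    (hf'' : ∀ t ∈ Icc a c, ‖f'' t‖ ≤ b) {t : ℝ} (ht : t ∈ Icc a c) :
    ‖f t - f a - (t - a) • f' a‖ ≤ b / 2 * (t - a) ^ 2 := by
  have ha : a ∈ Icc a c := left_mem_Icc.2 (ht.1.trans ht.2)
  have hf'_lip (u : ℝ) (hu : u ∈ Icc a c) : ‖f' u - f' a‖ ≤ b * (u - a) := by
    simpa [Real.norm_eq_abs, abs_of_nonneg (sub_nonneg.2 hu.1)] using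
      (convex_Icc a c).norm_image_sub_le_of_norm_hasDerivWithin_le hf' hf'' ha hu
  have hcont : ContinuousOn (fun u ↦ f u - f a - (u - a) • f' a) (Icc a c) :=
    ((HasDerivWithinAt.continuousOn hf).sub continuousOn_const).sub
      ((continuousOn_id.sub continuousOn_const).smul continuousOn_const)
  have hderiv (u : ℝ) (hu : u ∈ Ico a c) :
      HasDerivWithinAt (fun u ↦ f u - f a - (u - a) • f' a) (f' u - f' a) (Ici u) u := by
    have hmem : Icc a c ∈ nhdsWithin u (Ici u) :=
      Filter.mem_of_superset (Icc_mem_nhdsGE hu.2) (Icc_subset_Icc_left hu.1)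
    have hlin : HasDerivWithinAt (fun u ↦ (u - a) • f' a) (f' a) (Ici u) u := by
      simpa using (((hasDerivAt_id u).sub_const a).smul_const (f' a)).hasDerivWithinAt
    exact (((hf u (Ico_subset_Icc_self hu)).mono_of_mem_nhdsWithin hmem).sub_const _).sub hlin
  have hB (u : ℝ) : HasDerivAt (fun u ↦ b / 2 * (u - a) ^ 2) (b * (u - a)) u := by
    refine (((hasDerivAt_pow 2 (u - a)).comp_sub_const u a).const_mul (b / 2)).congr_deriv ?_
    norm_num
    ring
  exact image_norm_le_of_norm_deriv_right_le_deriv_boundary hcont hderiv (by simp) hB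
    (fun u hu ↦ hf'_lip u (Ico_subset_Icc_self hu)) ht

theorem le_norm_sub_sq_of_norm_sub_smul_le {E : Type*} [NormedAddCommGroup E]
    [InnerProductSpace ℝ E] {u v x : E} {s ε : ℝ} (hu : ‖u‖ = 1) (hux : inner ℝ u x = 0)
    (hv : ‖v - s • u‖ ≤ ε) (hεs : ε ≤ s) :
    ‖x‖ ^ 2 + (s - ε) ^ 2 - 2 * ε * ‖x‖ ≤ ‖v - x‖ ^ 2 := by
  have hs : 0 ≤ s := (norm_nonneg _).trans (hv.trans hεs)
  have hv_norm : s - ε ≤ ‖v‖ := by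
    have := norm_sub_norm_le (s • u) v
    rw [norm_sub_rev, norm_smul, hu, Real.norm_of_nonneg hs, mul_one] at this
    linarith
  have hvx : inner ℝ v x ≤ ε * ‖x‖ := by
    have hvx_eq : inner ℝ v x = inner ℝ (v - s • u) x := by
      rw [inner_sub_left, inner_smul_left, hux, mul_zero, sub_zero]
    rw [hvx_eq]
    exact (real_inner_le_norm _ _).trans (mul_le_mul_of_nonneg_right hv (norm_nonneg x))
  have hv_sq : (s - ε) ^ 2 ≤ ‖v‖ ^ 2 := pow_le_pow_left₀ (by linarith) hv_norm 2
  rw [norm_sub_sq_real]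
  linarith

theorem curve_distance_lower_bound_general
    (b r d : ℝ) (hb : 0 < b) (hr : r ≤ 1 / (4 * b)) (hd0 : 0 ≤ d) (hdr : d ≤ r)
    (φ φ' φ'' : ℝ → EuclideanSpace ℝ (Fin 3))
    (hder1 : ∀ s ∈ Set.Icc 0 r, HasDerivWithinAt φ (φ' s) (Set.Icc 0 r) s)
    (hder2 : ∀ s ∈ Set.Icc 0 r, HasDerivWithinAt φ' (φ'' s) (Set.Icc 0 r) s)
    (hφ0 : φ 0 = 0) (hφ'0 : φ' 0 = EuclideanSpace.single (0 : Fin 3) (1 : ℝ))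
    (hbnd : ∀ s ∈ Set.Icc 0 r, ‖φ'' s‖ ≤ b)
    (x : EuclideanSpace ℝ (Fin 3)) (hx : x = EuclideanSpace.single (2 : Fin 3) (-d))
    (s : ℝ) (hs : s ∈ Set.Icc 0 r) :
    ‖x - φ 0‖ ^ 2 + 1 / 2 * s ^ 2 ≤ ‖φ s - x‖ ^ 2 := by
  have hbr : b * r ≤ 1 / 4 := by
    rw [le_div_iff₀ (by positivity)] at hr
    linarith
  have hbs : b * s ≤ 1 / 4 := (mul_le_mul_of_nonneg_left hs.2 hb.le).trans hbr
  have hbd : b * d ≤ 1 / 4 := (mul_le_mul_of_nonneg_left hdr hb.le).trans hbr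
  have htaylor : ‖φ s - s • φ' 0‖ ≤ b / 2 * s ^ 2 := by
    simpa [hφ0] using norm_sub_sub_smul_le_of_norm_deriv2_le hder1 hder2 hbnd hs
  have hx_norm : ‖x‖ = d := by simp [hx, abs_of_nonneg hd0]
  have hφ'0_norm : ‖φ' 0‖ = 1 := by simp [hφ'0]
  have horth : inner ℝ (φ' 0) x = 0 := by simp [hφ'0, hx, EuclideanSpace.inner_single_left]
  have hdist := le_norm_sub_sq_of_norm_sub_smul_le hφ'0_norm horth htaylor (by nlinarith [hs.1])
  rw [hφ0, sub_zero, hx_norm]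
  rw [hx_norm] at hdist
  -- `(s - b s²/2)² ≥ s² - b s³ ≥ 3s²/4` and `b d s² ≤ s²/4`
  nlinarith [mul_le_mul_of_nonneg_right hbs (sq_nonneg s), mul_le_mul_of_nonneg_right hbd (sq_nonneg s),
    sq_nonneg (b * s ^ 2)]

/-- a `C²` unit-speed curve `φ : [0,r] → ℝ³` with `φ(0) = 0`,
`φ'(0) = (1,0,0)`, `|φ''| ≤ b` and `r ≤ 1/(4b)`; for `x = (0,0,-d)` with
`0 ≤ d ≤ r` and every `s ∈ [0,r]`: `|x - φ(0)|² + (1/2)s² ≤ |φ(s) - x|²`. -/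
theorem curve_distance_lower_bound
    (b r d : ℝ) (hb : 0 < b) (hr : r ≤ 1 / (4 * b)) (hd0 : 0 ≤ d) (hdr : d ≤ r)
    (φ φ' φ'' : ℝ → EuclideanSpace ℝ (Fin 3))
    (hder1 : ∀ s ∈ Set.Icc 0 r, HasDerivWithinAt φ (φ' s) (Set.Icc 0 r) s)
    (hder2 : ∀ s ∈ Set.Icc 0 r, HasDerivWithinAt φ' (φ'' s) (Set.Icc 0 r) s)
    (hcont2 : ContinuousOn φ'' (Set.Icc 0 r))
    (hunit : ∀ s ∈ Set.Icc 0 r, ‖φ' s‖ = 1)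
    (hφ0 : φ 0 = 0) (hφ'0 : φ' 0 = EuclideanSpace.single (0 : Fin 3) (1 : ℝ))
    (hbnd : ∀ s ∈ Set.Icc 0 r, ‖φ'' s‖ ≤ b)
    (x : EuclideanSpace ℝ (Fin 3)) (hx : x = EuclideanSpace.single (2 : Fin 3) (-d))
    (s : ℝ) (hs : s ∈ Set.Icc 0 r) :
    ‖x - φ 0‖ ^ 2 + 1 / 2 * s ^ 2 ≤ ‖φ s - x‖ ^ 2 :=
  curve_distance_lower_bound_general b r d hb hr hd0 hdr φ φ' φ'' hder1 hder2 hφ0 hφ'0 hbnd x hx s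
    hs
end

section
/- Let φ : [0, r] → ℝ³ be a C² unit-speed curve with φ'(0) = e for a unit vector e, satisfying the curvature bound |φ''(s)| ≤ b and r ≤ 1/(4b). Then for every s ∈ [0, r], s ≤ (8/7)|φ(s) - φ(0)|. -/
/-!
Integrating `‖φ''‖ ≤ b` twice gives the Taylor bound `‖φ s - φ 0 - s • φ' 0‖ ≤ b s² / 2`.
Since `φ' 0` is a unit vector, `s - ‖φ s - φ 0‖ ≤ b s² / 2 ≤ s / 8` once `b s ≤ 1/4`.
-/

open Set

section TaylorBound

variable {E : Type*} [NormedAddCommGroup E] [NormedSpace ℝ E]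
  {b r : ℝ} {φ φ' φ'' : ℝ → E}

theorem norm_sub_deriv_zero_le_of_norm_deriv_le
    (hder : ∀ t ∈ Icc 0 r, HasDerivWithinAt φ' (φ'' t) (Icc 0 r) t)
    (hbnd : ∀ t ∈ Icc 0 r, ‖φ'' t‖ ≤ b) {t : ℝ} (ht : t ∈ Icc 0 r) :
    ‖φ' t - φ' 0‖ ≤ b * t := by
  have h0 : (0 : ℝ) ∈ Icc 0 r := ⟨le_rfl, ht.1.trans ht.2⟩
  simpa [abs_of_nonneg ht.1] using
    (convex_Icc 0 r).norm_image_sub_le_of_norm_hasDerivWithin_le hder hbnd h0 ht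

theorem norm_sub_sub_smul_deriv_le
    (hder1 : ∀ t ∈ Icc 0 r, HasDerivWithinAt φ (φ' t) (Icc 0 r) t)
    (hder2 : ∀ t ∈ Icc 0 r, HasDerivWithinAt φ' (φ'' t) (Icc 0 r) t)
    (hbnd : ∀ t ∈ Icc 0 r, ‖φ'' t‖ ≤ b) {s : ℝ} (hs : s ∈ Icc 0 r) :
    ‖φ s - φ 0 - s • φ' 0‖ ≤ b / 2 * s ^ 2 := by
  set f : ℝ → E := fun t => φ t - φ 0 - t • φ' 0
  have hf_cont : ContinuousOn f (Icc 0 r) :=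
    (ContinuousOn.sub (fun t ht => (hder1 t ht).continuousWithinAt)
      continuousOn_const).sub (continuous_id.smul continuous_const).continuousOn
  have hf_deriv : ∀ t ∈ Ico 0 r, HasDerivWithinAt f (φ' t - φ' 0) (Ici t) t := by
    intro t ht
    have hφ : HasDerivWithinAt φ (φ' t) (Ici t) t :=
      (hder1 t (Ico_subset_Icc_self ht)).mono_of_mem_nhdsWithin (Icc_mem_nhdsGE_of_mem ht)
    exact ((hφ.sub_const (φ 0)).sub ((hasDerivWithinAt_id t _).smul_const (φ' 0))).congr_deriv
      (by rw [one_smul])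
  have hbound_deriv : ∀ x : ℝ, HasDerivAt (fun t => b / 2 * t ^ 2) (b * x) x := fun x =>
    ((hasDerivAt_pow 2 x).const_mul (b / 2)).congr_deriv (by ring)
  refine image_norm_le_of_norm_deriv_right_le_deriv_boundary hf_cont hf_deriv
    (by simp [f]) hbound_deriv (fun t ht => ?_) hs
  exact norm_sub_deriv_zero_le_of_norm_deriv_le hder2 hbnd (Ico_subset_Icc_self ht)

theorem sub_norm_sub_le_of_norm_deriv_le
    (hder1 : ∀ t ∈ Icc 0 r, HasDerivWithinAt φ (φ' t) (Icc 0 r) t)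
    (hder2 : ∀ t ∈ Icc 0 r, HasDerivWithinAt φ' (φ'' t) (Icc 0 r) t)
    (hbnd : ∀ t ∈ Icc 0 r, ‖φ'' t‖ ≤ b) (hunit : ‖φ' 0‖ = 1) {s : ℝ} (hs : s ∈ Icc 0 r) :
    s - ‖φ s - φ 0‖ ≤ b / 2 * s ^ 2 :=
  calc s - ‖φ s - φ 0‖ = ‖s • φ' 0‖ - ‖φ s - φ 0‖ := by
        rw [norm_smul, hunit, mul_one, Real.norm_of_nonneg hs.1]
    _ ≤ ‖φ s - φ 0 - s • φ' 0‖ := by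
        rw [norm_sub_rev (φ s - φ 0)]; exact norm_sub_norm_le _ _
    _ ≤ b / 2 * s ^ 2 := norm_sub_sub_smul_deriv_le hder1 hder2 hbnd hs

end TaylorBound

theorem arclength_le_chord_general
    (b r : ℝ) (hb : 0 < b) (hr : r ≤ 1 / (4 * b))
    (φ φ' φ'' : ℝ → EuclideanSpace ℝ (Fin 3))
    (e : EuclideanSpace ℝ (Fin 3)) (he : ‖e‖ = 1)
    (hder1 : ∀ s ∈ Set.Icc 0 r, HasDerivWithinAt φ (φ' s) (Set.Icc 0 r) s)
    (hder2 : ∀ s ∈ Set.Icc 0 r, HasDerivWithinAt φ' (φ'' s) (Set.Icc 0 r) s)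
    (hφ'0 : φ' 0 = e)
    (hbnd : ∀ s ∈ Set.Icc 0 r, ‖φ'' s‖ ≤ b)
    (s : ℝ) (hs : s ∈ Set.Icc 0 r) :
    s ≤ 8 / 7 * ‖φ s - φ 0‖ := by
  have hbs : b * s ≤ 1 / 4 :=
    calc b * s ≤ b * (1 / (4 * b)) := mul_le_mul_of_nonneg_left (hs.2.trans hr) hb.le
      _ = 1 / 4 := by field_simp
  have htaylor := sub_norm_sub_le_of_norm_deriv_le hder1 hder2 hbnd (hφ'0 ▸ he) hs
  nlinarith [hs.1]

/-- a `C²` unit-speed curve `φ : [0,r] → ℝ³` with `φ'(0) = e` a unit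
vector, `|φ''| ≤ b` and `r ≤ 1/(4b)` satisfies `s ≤ (8/7)|φ(s) - φ(0)|` for every
`s ∈ [0,r]`. -/
theorem arclength_le_chord
    (b r : ℝ) (hb : 0 < b) (hr : r ≤ 1 / (4 * b))
    (φ φ' φ'' : ℝ → EuclideanSpace ℝ (Fin 3))
    (e : EuclideanSpace ℝ (Fin 3)) (he : ‖e‖ = 1)
    (hder1 : ∀ s ∈ Set.Icc 0 r, HasDerivWithinAt φ (φ' s) (Set.Icc 0 r) s)
    (hder2 : ∀ s ∈ Set.Icc 0 r, HasDerivWithinAt φ' (φ'' s) (Set.Icc 0 r) s)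
    (hcont2 : ContinuousOn φ'' (Set.Icc 0 r))
    (hunit : ∀ s ∈ Set.Icc 0 r, ‖φ' s‖ = 1)
    (hφ'0 : φ' 0 = e)
    (hbnd : ∀ s ∈ Set.Icc 0 r, ‖φ'' s‖ ≤ b)
    (s : ℝ) (hs : s ∈ Set.Icc 0 r) :
    s ≤ 8 / 7 * ‖φ s - φ 0‖ :=
  arclength_le_chord_general b r hb hr φ φ' φ'' e he hder1 hder2 hφ'0 hbnd s hs
end

section
/- Let φ : [0, τ] → ℝ³ be a C² unit-speed curve with φ(0) = x, φ'(0) = v a unit vector, n a unit vector with n·v = 0, satisfying |φ''(s)| ≤ b and τ ≤ 1/(4b). Set y = φ(τ). Then |n·(x - y)| ≤ 4b|x - y|². -/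
open scoped RealInnerProductSpace

/-- a `C²` unit-speed curve `φ : [0,τ] → ℝ³` with `φ(0) = x`,
`φ'(0) = v` a unit vector, `n` a unit vector with `n·v = 0`, `|φ''| ≤ b` and
`τ ≤ 1/(4b)`; with `y = φ(τ)`, one has `|n·(x - y)| ≤ 4b|x - y|²`. -/
theorem normal_component_of_chord
    (b τ : ℝ) (hb : 0 < b) (hτ0 : 0 ≤ τ) (hτ : τ ≤ 1 / (4 * b))
    (φ φ' φ'' : ℝ → EuclideanSpace ℝ (Fin 3))
    (hder1 : ∀ s ∈ Set.Icc 0 τ, HasDerivWithinAt φ (φ' s) (Set.Icc 0 τ) s)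
    (hder2 : ∀ s ∈ Set.Icc 0 τ, HasDerivWithinAt φ' (φ'' s) (Set.Icc 0 τ) s)
    (hcont2 : ContinuousOn φ'' (Set.Icc 0 τ))
    (hunit : ∀ s ∈ Set.Icc 0 τ, ‖φ' s‖ = 1)
    (hbnd : ∀ s ∈ Set.Icc 0 τ, ‖φ'' s‖ ≤ b)
    (x v n y : EuclideanSpace ℝ (Fin 3))
    (hx : x = φ 0) (hv : v = φ' 0) (hvu : ‖v‖ = 1)
    (hn : ‖n‖ = 1) (hnv : ⟪n, v⟫ = 0)
    (hy : y = φ τ) :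
    |⟪n, x - y⟫| ≤ 4 * b * ‖x - y‖ ^ 2 := by
  have hconv : Convex ℝ (Set.Icc (0:ℝ) τ) := convex_Icc 0 τ
  have h0mem : (0:ℝ) ∈ Set.Icc (0:ℝ) τ := ⟨le_refl _, hτ0⟩
  have hτmem : τ ∈ Set.Icc (0:ℝ) τ := ⟨hτ0, le_refl _⟩
  have hbτ : b * τ ≤ 1/4 := by
    have h4b : (0:ℝ) < 4 * b := by linarith
    rw [le_div_iff₀ h4b] at hτ
    linarith
  -- bound on ‖φ' s - v‖
  have key1 : ∀ s ∈ Set.Icc (0:ℝ) τ, ‖φ' s - v‖ ≤ b * τ := by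
    intro s hs
    have := hconv.norm_image_sub_le_of_norm_hasDerivWithin_le hder2 hbnd h0mem hs
    rw [hv]
    calc ‖φ' s - φ' 0‖ ≤ b * ‖s - 0‖ := this
    _ = b * s := by rw [sub_zero, Real.norm_eq_abs, abs_of_nonneg hs.1]
    _ ≤ b * τ := by nlinarith [hs.2]
  -- derivative of s ↦ ⟪c, φ s⟫
  have hder : ∀ (c : EuclideanSpace ℝ (Fin 3)), ∀ s ∈ Set.Icc (0:ℝ) τ,
      HasDerivWithinAt (fun s => ⟪c, φ s⟫) ⟪c, φ' s⟫ (Set.Icc 0 τ) s := by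
    intro c s hs
    exact ((innerSL ℝ c).hasFDerivAt.comp_hasDerivWithinAt s (hder1 s hs))
  -- n-component bound
  have key2 : |⟪n, φ τ - φ 0⟫| ≤ b * τ * τ := by
    have hb' : ∀ s ∈ Set.Icc (0:ℝ) τ, ‖⟪n, φ' s⟫‖ ≤ b * τ := by
      intro s hs
      have : ⟪n, φ' s⟫ = ⟪n, φ' s - v⟫ := by
        rw [inner_sub_right, hnv, sub_zero]
      rw [Real.norm_eq_abs, this]
      calc |⟪n, φ' s - v⟫| ≤ ‖n‖ * ‖φ' s - v‖ := abs_real_inner_le_norm _ _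
      _ ≤ b * τ := by rw [hn, one_mul]; exact key1 s hs
    have := hconv.norm_image_sub_le_of_norm_hasDerivWithin_le (hder n) hb' h0mem hτmem
    rw [inner_sub_right]
    calc |⟪n, φ τ⟫ - ⟪n, φ 0⟫| ≤ b * τ * ‖τ - 0‖ := this
    _ = b * τ * τ := by rw [sub_zero, Real.norm_eq_abs, abs_of_nonneg hτ0]
  -- v-component lower bound
  have key3 : (3/4) * τ ≤ ⟪v, φ τ - φ 0⟫ := by
    have hk : ∀ s ∈ Set.Icc (0:ℝ) τ,
        HasDerivWithinAt (fun s => ⟪v, φ s⟫ - s) (⟪v, φ' s⟫ - 1) (Set.Icc 0 τ) s :=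
      fun s hs => (hder v s hs).sub (hasDerivWithinAt_id s _)
    have hvv : ⟪v, v⟫ = 1 := by
      rw [real_inner_self_eq_norm_sq, hvu]; norm_num
    have hb' : ∀ s ∈ Set.Icc (0:ℝ) τ, ‖⟪v, φ' s⟫ - 1‖ ≤ b * τ := by
      intro s hs
      have : ⟪v, φ' s⟫ - 1 = ⟪v, φ' s - v⟫ := by
        rw [inner_sub_right, hvv]
      rw [Real.norm_eq_abs, this]
      calc |⟪v, φ' s - v⟫| ≤ ‖v‖ * ‖φ' s - v‖ := abs_real_inner_le_norm _ _
      _ ≤ b * τ := by rw [hvu, one_mul]; exact key1 s hs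
    have := hconv.norm_image_sub_le_of_norm_hasDerivWithin_le hk hb' h0mem hτmem
    simp only [Real.norm_eq_abs, sub_zero, inner_sub_right] at this ⊢
    rw [abs_of_nonneg hτ0] at this
    have habs := abs_le.1 this
    nlinarith [habs.1, hbτ, hτ0]
  have key4 : (3/4) * τ ≤ ‖x - y‖ := by
    calc (3/4) * τ ≤ ⟪v, φ τ - φ 0⟫ := key3
    _ ≤ |⟪v, φ τ - φ 0⟫| := le_abs_self _
    _ ≤ ‖v‖ * ‖φ τ - φ 0‖ := abs_real_inner_le_norm _ _
    _ = ‖x - y‖ := by rw [hvu, one_mul, hx, hy, norm_sub_rev]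
  have hxin : |⟪n, x - y⟫| ≤ b * τ * τ := by
    rw [hx, hy, ← abs_neg, ← inner_neg_right]
    simpa using key2
  have hn0 : (0:ℝ) ≤ ‖x - y‖ := norm_nonneg _
  nlinarith [mul_self_le_mul_self (by positivity : (0:ℝ) ≤ 3/4 * τ) key4, hb.le, hτ0, sq_nonneg (‖x - y‖), hxin]
end

section
/- Let φ : [0, τ] → ℝ³ be a C² unit-speed curve with |φ''(s)| ≤ b and τ ≤ 1/(4b). Set x = φ(0), y = φ(τ), v = φ'(0), v' = φ'(τ). Then |v - v'| ≤ 2√3 · b · |x - y|. -/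
/-!
On `[0, τ]` the tangent moves at speed at most `b`, so `‖φ'(0) - φ'(τ)‖ ≤ bτ`, and the curve stays
within `bτ²` of the tangent line `φ(0) + s φ'(0)`. Since `bτ ≤ 1/4`, the chord therefore has length
at least `(3/4)τ`, whence `‖φ'(0) - φ'(τ)‖ ≤ (4/3) b ‖φ(0) - φ(τ)‖ ≤ 2√3 b ‖φ(0) - φ(τ)‖`.
-/

open Set

section Curve

variable {E : Type*} [NormedAddCommGroup E] [NormedSpace ℝ E] {f f' f'' : ℝ → E} {a c b : ℝ}

theorem norm_image_sub_sub_smul_le (hac : a ≤ c)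
    (hf : ∀ s ∈ Icc a c, HasDerivWithinAt f (f' s) (Icc a c) s) {M : ℝ}
    (hM : ∀ s ∈ Icc a c, ‖f' s - f' a‖ ≤ M) :
    ‖f c - f a - (c - a) • f' a‖ ≤ M * (c - a) := by
  have hg : ∀ s ∈ Icc a c,
      HasDerivWithinAt (fun s => f s - (s - a) • f' a) (f' s - f' a) (Icc a c) s := fun s hs => by
    have h := (hf s hs).sub (((hasDerivWithinAt_id s _).sub_const a).smul_const (f' a))
    rwa [one_smul] at h
  have := norm_image_sub_le_of_norm_deriv_le_segment' hg
    (fun s hs => hM s (Ico_subset_Icc_self hs)) c (right_mem_Icc.2 hac)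
  simpa [sub_right_comm] using this

variable (hf : ∀ s ∈ Icc a c, HasDerivWithinAt f (f' s) (Icc a c) s)
  (hf' : ∀ s ∈ Icc a c, HasDerivWithinAt f' (f'' s) (Icc a c) s)
  (hf'' : ∀ s ∈ Icc a c, ‖f'' s‖ ≤ b)
include hf' hf''

theorem norm_deriv_sub_le_of_norm_deriv2_le : ∀ s ∈ Icc a c, ‖f' s - f' a‖ ≤ b * (s - a) :=
  norm_image_sub_le_of_norm_deriv_le_segment' hf' fun s hs => hf'' s (Ico_subset_Icc_self hs)

include hf in
theorem le_norm_image_sub_of_norm_deriv_eq_one (hac : a ≤ c) (hunit : ‖f' a‖ = 1) :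
    (1 - b * (c - a)) * (c - a) ≤ ‖f c - f a‖ := by
  have hnear_tangent : ‖f c - f a - (c - a) • f' a‖ ≤ b * (c - a) * (c - a) :=
    norm_image_sub_sub_smul_le hac hf fun s hs =>
      (norm_deriv_sub_le_of_norm_deriv2_le hf' hf'' s hs).trans <|
        mul_le_mul_of_nonneg_left (by linarith [hs.2]) ((norm_nonneg _).trans (hf'' a ⟨le_rfl, hac⟩))
  have hnorm_smul : ‖(c - a) • f' a‖ = c - a := by
    rw [norm_smul, hunit, mul_one, Real.norm_of_nonneg (sub_nonneg.2 hac)]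
  have := norm_sub_norm_le ((c - a) • f' a) (f c - f a)
  rw [norm_sub_rev ((c - a) • f' a)] at this
  nlinarith

end Curve

theorem tangent_variation_le_general
    (b τ : ℝ) (hb : 0 < b) (hτ0 : 0 ≤ τ) (hτ : τ ≤ 1 / (4 * b))
    (φ φ' φ'' : ℝ → EuclideanSpace ℝ (Fin 3))
    (hder1 : ∀ s ∈ Set.Icc 0 τ, HasDerivWithinAt φ (φ' s) (Set.Icc 0 τ) s)
    (hder2 : ∀ s ∈ Set.Icc 0 τ, HasDerivWithinAt φ' (φ'' s) (Set.Icc 0 τ) s)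
    (hunit : ∀ s ∈ Set.Icc 0 τ, ‖φ' s‖ = 1)
    (hbnd : ∀ s ∈ Set.Icc 0 τ, ‖φ'' s‖ ≤ b) :
    ‖φ' 0 - φ' τ‖ ≤ 2 * Real.sqrt 3 * b * ‖φ 0 - φ τ‖ := by
  have hbτ : b * τ ≤ 1 / 4 := by
    rw [le_div_iff₀ (by positivity)] at hτ
    linarith
  have htangent : ‖φ' 0 - φ' τ‖ ≤ b * τ := by
    simpa [norm_sub_rev] using norm_deriv_sub_le_of_norm_deriv2_le hder2 hbnd τ ⟨hτ0, le_rfl⟩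
  have hchord : 3 / 4 * τ ≤ ‖φ 0 - φ τ‖ := by
    have := le_norm_image_sub_of_norm_deriv_eq_one hder1 hder2 hbnd hτ0 (hunit 0 ⟨le_rfl, hτ0⟩)
    rw [sub_zero, norm_sub_rev] at this
    nlinarith
  have hsqrt : (1 : ℝ) ≤ Real.sqrt 3 := by
    rw [Real.one_le_sqrt]
    norm_num
  calc ‖φ' 0 - φ' τ‖ ≤ b * τ := htangent
    _ ≤ 4 / 3 * b * ‖φ 0 - φ τ‖ := by nlinarith
    _ ≤ 2 * Real.sqrt 3 * b * ‖φ 0 - φ τ‖ := by gcongr; linarith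

/-- a `C²` unit-speed curve `φ : [0,τ] → ℝ³` with `|φ''| ≤ b` and
`τ ≤ 1/(4b)`; with `x = φ(0)`, `y = φ(τ)`, `v = φ'(0)`, `v' = φ'(τ)`:
`|v - v'| ≤ 2√3·b·|x - y|`. -/
theorem tangent_variation_le
    (b τ : ℝ) (hb : 0 < b) (hτ0 : 0 ≤ τ) (hτ : τ ≤ 1 / (4 * b))
    (φ φ' φ'' : ℝ → EuclideanSpace ℝ (Fin 3))
    (hder1 : ∀ s ∈ Set.Icc 0 τ, HasDerivWithinAt φ (φ' s) (Set.Icc 0 τ) s)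
    (hder2 : ∀ s ∈ Set.Icc 0 τ, HasDerivWithinAt φ' (φ'' s) (Set.Icc 0 τ) s)
    (hcont2 : ContinuousOn φ'' (Set.Icc 0 τ))
    (hunit : ∀ s ∈ Set.Icc 0 τ, ‖φ' s‖ = 1)
    (hbnd : ∀ s ∈ Set.Icc 0 τ, ‖φ'' s‖ ≤ b) :
    ‖φ' 0 - φ' τ‖ ≤ 2 * Real.sqrt 3 * b * ‖φ 0 - φ τ‖ :=
  tangent_variation_le_general b τ hb hτ0 hτ φ φ' φ'' hder1 hder2 hunit hbnd
end

section
/- Let S be a sphere in ℝ³ of radius R₃ centered at Y_o, let Y be a point on S, let y be a point on the segment from Y to Y_o with |y - Y| = d ≤ R₃, and let x be any point on or inside S with (Y_o - Y)·(x - y) ≤ 0 (i.e., x lies on the same side of the plane through y perpendicular to Y - Y_o as Y). Then |x - y| ≤ √(2R₃) · √d. -/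
open scoped RealInnerProductSpace

/-- `S` a sphere of radius `R₃` centered at `Yo`, `Y ∈ S`,
`y = Y + (d/R₃)(Yo - Y)` with `0 ≤ d ≤ R₃`, and `x` inside or on `S` with
`n(Y)·(x - y) ≥ 0` where `n(Y) = (Y - Yo)/R₃`. Then `|x - y| ≤ √(2R₃)·√d`. -/
theorem sphere_chord_sqrt_bound_outer
    (R₃ d : ℝ) (hR : 0 < R₃) (hd0 : 0 ≤ d) (hdR : d ≤ R₃)
    (Yo Y y x : EuclideanSpace ℝ (Fin 3))
    (hY : dist Y Yo = R₃)
    (hy : y = Y + (d / R₃) • (Yo - Y))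
    (hx : dist x Yo ≤ R₃)
    (hside : 0 ≤ ⟪R₃⁻¹ • (Y - Yo), x - y⟫) :
    dist x y ≤ Real.sqrt (2 * R₃) * Real.sqrt d := by
  set u := Y - Yo with hu
  have hnu : ‖u‖ = R₃ := by rw [hu, ← dist_eq_norm]; exact hY
  set t : ℝ := 1 - d / R₃ with ht
  have ht0 : 0 ≤ t := by
    rw [ht]
    have : d / R₃ ≤ 1 := (div_le_one hR).mpr hdR
    linarith
  have hb : y - Yo = t • u := by
    rw [hy, hu, ht]; module
  -- side condition: ⟪u, x - y⟫ ≥ 0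
  have hside' : 0 ≤ ⟪u, x - y⟫ := by
    have := hside
    rw [real_inner_smul_left] at this
    have hRinv : 0 < R₃⁻¹ := inv_pos.mpr hR
    nlinarith [this]
  have huy : ⟪u, y - Yo⟫ = t * R₃ ^ 2 := by
    rw [hb, real_inner_smul_right, real_inner_self_eq_norm_sq, hnu]
  have hsplit : ⟪u, x - y⟫ = ⟪u, x - Yo⟫ - ⟪u, y - Yo⟫ := by
    rw [← inner_sub_right]
    congr 1
    abel
  have hkey : t * R₃ ^ 2 ≤ ⟪u, x - Yo⟫ := by
    rw [hsplit, huy] at hside'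
    linarith
  have hxy : ⟪x - Yo, y - Yo⟫ = t * ⟪u, x - Yo⟫ := by
    rw [hb, real_inner_smul_right, real_inner_comm]
  have hinner_ge : t ^ 2 * R₃ ^ 2 ≤ ⟪x - Yo, y - Yo⟫ := by
    rw [hxy]
    nlinarith [mul_le_mul_of_nonneg_left hkey ht0]
  have hnx : ‖x - Yo‖ ≤ R₃ := by rw [← dist_eq_norm]; exact hx
  have hny : ‖y - Yo‖ = t * R₃ := by
    rw [hb, norm_smul, hnu, Real.norm_eq_abs, abs_of_nonneg ht0]
  have hsq : dist x y ^ 2 ≤ 2 * R₃ * d := by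
    have hexp : dist x y ^ 2
        = ‖x - Yo‖ ^ 2 - 2 * ⟪x - Yo, y - Yo⟫ + ‖y - Yo‖ ^ 2 := by
      rw [dist_eq_norm]
      have : x - y = (x - Yo) - (y - Yo) := by abel
      rw [this, norm_sub_sq_real]
    have h1 : ‖x - Yo‖ ^ 2 ≤ R₃ ^ 2 := by
      nlinarith [norm_nonneg (x - Yo)]
    have htR : t * R₃ = R₃ - d := by
      rw [ht]; field_simp
    rw [hexp, hny]
    nlinarith [hinner_ge]
  have hd2 : (0:ℝ) ≤ 2 * R₃ := by linarith
  calc dist x y ≤ Real.sqrt (2 * R₃ * d) := by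
        have := Real.sqrt_le_sqrt hsq
        rwa [Real.sqrt_sq dist_nonneg] at this
    _ = Real.sqrt (2 * R₃) * Real.sqrt d := Real.sqrt_mul hd2 d
end

section
/- Let S be a sphere in ℝ³ of radius R₂ centered at Y_i, let Y ∈ S, let n(Y) = (Y - Y_i)/R₂, and let y = Y - d·n(Y) with 0 < d ≤ R₂, so that y lies inside S between Y and Y_i at distance d from Y. Then for any x with n(Y)·(x - y) ≤ 0 and |x - Y_i| ≥ R₂ (x outside or on S), we have |x - y| ≥ √(R₂ d). -/
open scoped RealInnerProductSpace

/-- `S` a sphere of radius `R₂` centered at `Yi`, `Y ∈ S` with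
outward normal `n(Y) = (Y - Yi)/R₂`, `y = Y - d·n(Y)` with `0 < d ≤ R₂`, and `x`
outside or on `S` with `n(Y)·(x - y) ≤ 0`. Then `|x - y| ≥ √(R₂ d)`. -/
theorem sphere_chord_sqrt_bound_inner
    (R₂ d : ℝ) (hR : 0 < R₂) (hd0 : 0 < d) (hdR : d ≤ R₂)
    (Yi Y y x : EuclideanSpace ℝ (Fin 3))
    (hY : dist Y Yi = R₂)
    (hy : y = Y - d • (R₂⁻¹ • (Y - Yi)))
    (hx : R₂ ≤ dist x Yi)
    (hside : ⟪R₂⁻¹ • (Y - Yi), x - y⟫ ≤ 0) :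
    Real.sqrt (R₂ * d) ≤ dist x y := by
  have hYn : ‖Y - Yi‖ = R₂ := by rw [← dist_eq_norm]; exact hY
  have hyw : y - Yi = ((R₂ - d) / R₂) • (Y - Yi) := by
    rw [hy, smul_smul]
    have h1 : Y - (d * R₂⁻¹) • (Y - Yi) - Yi = (1 - d * R₂⁻¹) • (Y - Yi) := by
      rw [sub_smul, one_smul]; abel
    rw [h1]
    congr 1
    field_simp
  have hwnorm : ‖y - Yi‖ = R₂ - d := by
    rw [hyw, norm_smul]
    rw [hYn, Real.norm_eq_abs, abs_of_nonneg (div_nonneg (by linarith) hR.le)]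
    field_simp
  have hinner : ⟪y - Yi, x - y⟫ ≤ 0 := by
    rw [hyw]
    have : ((R₂ - d) / R₂) • (Y - Yi) = (R₂ - d) • (R₂⁻¹ • (Y - Yi)) := by
      rw [smul_smul]; ring_nf
    rw [this, real_inner_smul_left]
    exact mul_nonpos_of_nonneg_of_nonpos (by linarith) hside
  have hxYi : x - Yi = (x - y) + (y - Yi) := by abel
  have hxn : R₂ ≤ ‖x - Yi‖ := by rw [← dist_eq_norm]; exact hx
  have hsq : R₂ ^ 2 ≤ ‖x - Yi‖ ^ 2 := by
    have := norm_nonneg (x - Yi); nlinarith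
  have hexp : ‖x - Yi‖ ^ 2 = ‖x - y‖ ^ 2 + 2 * ⟪x - y, y - Yi⟫ + ‖y - Yi‖ ^ 2 := by
    rw [hxYi]
    rw [← real_inner_self_eq_norm_sq, ← real_inner_self_eq_norm_sq,
      ← real_inner_self_eq_norm_sq]
    rw [inner_add_add_self, real_inner_comm (y - Yi) (x - y)]
    ring
  have hcomm : ⟪x - y, y - Yi⟫ = ⟪y - Yi, x - y⟫ := real_inner_comm _ _
  have key : R₂ * d ≤ ‖x - y‖ ^ 2 := by
    rw [hcomm] at hexp
    rw [hwnorm] at hexp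
    nlinarith
  calc Real.sqrt (R₂ * d) ≤ Real.sqrt (‖x - y‖ ^ 2) := Real.sqrt_le_sqrt key
    _ = ‖x - y‖ := Real.sqrt_sq (norm_nonneg _)
    _ = dist x y := (dist_eq_norm x y).symm
end

section
/- For every ε > 0 and a₁, a₂ > 0 there exists a constant C (depending on ε, a₁, a₂) such that for all η ∈ ℝ³: ∫_{ℝ³} |η - ζ|^{-(3-ε)} exp(-a₁|η - ζ|² - a₂(|η|² - |ζ|²)²/|η - ζ|²) dζ ≤ C(1 + |η|)^{-1}. -/
/-!
Write `v = η - ζ`. Since `‖η‖² - ‖ζ‖² = 2⟪η, v⟫ - ‖v‖²`, completing a square bounds the exponent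
by `-(3a₁/4)‖v‖² - B⟪η, v⟫²/‖v‖²` with `B = 4a₁a₂/(a₁ + 4a₂)`, and a quarter of the Gaussian
absorbs a power of `‖v‖`, lowering `ε - 3` to some `p ∈ (-3, 0)`. The resulting kernel
`caflischKernel` is bounded by the integrable `‖v‖ᵖ exp(-(a₁/2)‖v‖²)`, uniformly in `η`.
For the decay, rotate `η` to `(‖η‖, 0) ∈ ℝ × ℝ²` and write `v = (t, y)`. Where `t² ≤ ‖y‖²`, the
factor `exp(-B‖η‖²t²/‖v‖²)` is at most a Gaussian in `t` of width `‖y‖/‖η‖`, whose integral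
gains `1/‖η‖`; where `t² > ‖y‖²`, it is at most `exp(-B‖η‖²/2)`.
-/

open MeasureTheory Real Module WithLp
open scoped RealInnerProductSpace

lemma rpow_le_exp_mul_exp_mul_sq {ρ t r : ℝ} (hρ : 0 ≤ ρ) (ht : 0 < t) (hr : 0 ≤ r) :
    r ^ ρ ≤ exp (ρ ^ 2 / (4 * t)) * exp (t * r ^ 2) := by
  rw [← exp_add]
  rcases le_or_gt r 1 with h | h
  · exact (rpow_le_one hr h hρ).trans (one_le_exp (by positivity))
  · rw [rpow_def_of_pos (by linarith)]
    gcongr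
    have hlog : log r * ρ ≤ r * ρ := by
      gcongr; linarith [log_le_sub_one_of_pos (by linarith : 0 < r)]
    have : r * ρ - t * r ^ 2 ≤ ρ ^ 2 / (4 * t) := by
      rw [le_div_iff₀ (by linarith)]
      nlinarith [sq_nonneg (ρ - 2 * t * r)]
    linarith

lemma exp_neg_mul_sq_le_div {β c : ℝ} (hβ : 0 < β) (hc : 0 < c) :
    exp (-(β * c ^ 2)) ≤ (1 + β⁻¹) / c := by
  rw [exp_neg, inv_eq_one_div, div_le_div_iff₀ (exp_pos _) hc]
  have h1 := add_one_le_exp (β * c ^ 2)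
  have h2 : β * β⁻¹ = 1 := mul_inv_cancel₀ hβ.ne'
  have h3 : 0 < β⁻¹ := inv_pos.2 hβ
  nlinarith [sq_nonneg (c - 1)]

lemma rpow_mul_exp_le_add {p a b c r ρ t : ℝ} (hp : p < 0) (ha : 0 ≤ a) (hb : 0 ≤ b)
    (hρ : 0 ≤ ρ) (hr : 0 ≤ r) (hrt : r ^ 2 = t ^ 2 + ρ ^ 2) :
    r ^ p * exp (-a * r ^ 2 - b * (c * t) ^ 2 / r ^ 2) ≤
      ρ ^ p * exp (-a * ρ ^ 2) * exp (-(b * c ^ 2 / (2 * ρ ^ 2)) * t ^ 2) +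
        exp (-(b / 2 * c ^ 2)) * (r ^ p * exp (-a * r ^ 2)) := by
  rcases hr.eq_or_lt with rfl | hr
  · rw [zero_rpow hp.ne, zero_mul]; positivity
  rcases le_or_gt (t ^ 2) (ρ ^ 2) with h | h
  · -- `r² ≤ 2ρ²`: the Gaussian in `t` survives
    have hρ' : 0 < ρ := by nlinarith
    refine le_add_of_le_of_nonneg ?_ (by positivity)
    rw [mul_assoc, ← exp_add]
    refine mul_le_mul (rpow_le_rpow_of_nonpos hρ' ?_ hp.le) (exp_le_exp.2 ?_) (by positivity)
      (by positivity)
    · nlinarith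
    · have : b * c ^ 2 / (2 * ρ ^ 2) * t ^ 2 ≤ b * (c * t) ^ 2 / r ^ 2 := by
        rw [div_mul_eq_mul_div, mul_pow, ← mul_assoc]
        gcongr
        linarith
      nlinarith
  · -- `r² < 2t²`: a fixed fraction of `b c²` survives
    refine le_add_of_nonneg_of_le (by positivity) ?_
    rw [mul_left_comm, ← exp_add]
    gcongr
    have : b / 2 * c ^ 2 ≤ b * (c * t) ^ 2 / r ^ 2 := by
      rw [div_mul_eq_mul_div, div_le_div_iff₀ two_pos (by positivity), mul_pow]
      nlinarith [mul_nonneg hb (sq_nonneg c)]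
    linarith

lemma lintegral_ofReal_mul_exp_neg_mul_sq {A q : ℝ} (hA : 0 ≤ A) (hq : 0 < q) :
    ∫⁻ t : ℝ, ENNReal.ofReal (A * exp (-q * t ^ 2)) = ENNReal.ofReal (A * √(π / q)) := by
  simp_rw [ENNReal.ofReal_mul hA]
  rw [lintegral_const_mul' _ _ ENNReal.ofReal_ne_top,
    ← ofReal_integral_eq_lintegral_ofReal (integrable_exp_neg_mul_sq hq)
      (.of_forall fun t => (exp_pos _).le),
    integral_gaussian]

lemma lintegral_rpow_mul_exp_mul_gaussian_le {p a b c ρ : ℝ} (hp : p < 0) (hb : 0 < b)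
    (hc : 0 < c) (hρ : 0 ≤ ρ) :
    ∫⁻ t : ℝ, ENNReal.ofReal
        (ρ ^ p * exp (-a * ρ ^ 2) * exp (-(b * c ^ 2 / (2 * ρ ^ 2)) * t ^ 2)) ≤
      ENNReal.ofReal (√(2 * π / b) / c * (ρ ^ (p + 1) * exp (-a * ρ ^ 2))) := by
  rcases hρ.eq_or_lt with rfl | hρ
  · simp [zero_rpow hp.ne]
  rw [lintegral_ofReal_mul_exp_neg_mul_sq (by positivity) (by positivity)]
  have hsqrt : √(π / (b * c ^ 2 / (2 * ρ ^ 2))) = √(2 * π / b) * ρ / c := by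
    rw [← sqrt_sq (by positivity : 0 ≤ √(2 * π / b) * ρ / c), div_pow, mul_pow,
      sq_sqrt (by positivity)]
    congr 1
    field_simp
  rw [hsqrt, rpow_add_one hρ.ne']
  exact le_of_eq (by ring_nf)

lemma integrable_norm_rpow_mul_exp_neg_mul_sq {E : Type*} [NormedAddCommGroup E]
    [NormedSpace ℝ E] [Nontrivial E] [FiniteDimensional ℝ E] [MeasurableSpace E] [BorelSpace E]
    (μ : Measure E) [μ.IsAddHaarMeasure] {p a : ℝ} (ha : 0 < a) (hp : -(finrank ℝ E : ℝ) < p) :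
    Integrable (fun x : E => ‖x‖ ^ p * exp (-a * ‖x‖ ^ 2)) μ := by
  have hdim : ((finrank ℝ E - 1 : ℕ) : ℝ) = finrank ℝ E - 1 := by
    rw [Nat.cast_sub finrank_pos, Nat.cast_one]
  rw [integrable_fun_norm_addHaar μ (f := fun y => y ^ p * exp (-a * y ^ 2))]
  refine (integrableOn_rpow_mul_exp_neg_mul_sq ha (s := (finrank ℝ E - 1 : ℕ) + p)
    (by rw [hdim]; linarith)).congr_fun (fun y (hy : 0 < y) => ?_) measurableSet_Ioi
  rw [smul_eq_mul, ← mul_assoc, ← rpow_natCast, ← rpow_add hy]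

section Kernel

variable {E E' : Type*} [NormedAddCommGroup E] [InnerProductSpace ℝ E]
  [NormedAddCommGroup E'] [InnerProductSpace ℝ E']

noncomputable def caflischKernel (p a b : ℝ) (η v : E) : ℝ :=
  ‖v‖ ^ p * exp (-a * ‖v‖ ^ 2 - b * ⟪η, v⟫ ^ 2 / ‖v‖ ^ 2)

lemma caflischKernel_le {p a b : ℝ} (hb : 0 ≤ b) (η v : E) :
    caflischKernel p a b η v ≤ ‖v‖ ^ p * exp (-a * ‖v‖ ^ 2) := by
  unfold caflischKernel
  gcongr
  have : 0 ≤ b * ⟪η, v⟫ ^ 2 / ‖v‖ ^ 2 := by positivity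
  linarith

lemma caflischKernel_map (L : E ≃ₗᵢ[ℝ] E') (p a b : ℝ) (η v : E) :
    caflischKernel p a b (L η) (L v) = caflischKernel p a b η v := by
  simp only [caflischKernel, L.norm_map, L.inner_map_map]

lemma caflischKernel_toLp {F : Type*} [NormedAddCommGroup F] [InnerProductSpace ℝ F]
    (p a b c : ℝ) (x : ℝ × F) :
    caflischKernel p a b (toLp 2 (c, (0 : F))) (toLp 2 x) =
      ‖toLp 2 x‖ ^ p * exp (-a * ‖toLp 2 x‖ ^ 2 - b * (c * x.1) ^ 2 / ‖toLp 2 x‖ ^ 2) := by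
  simp [caflischKernel, mul_comm]

lemma measurable_caflischKernel [MeasurableSpace E] [BorelSpace E] (p a b : ℝ) (η : E) :
    Measurable (caflischKernel p a b η) := by
  have : Measurable fun v : E => ⟪η, v⟫ := (continuous_const.inner continuous_id).measurable
  unfold caflischKernel
  fun_prop

lemma caflisch_exponent_le {a b : ℝ} (ha : 0 < a) (hb : 0 < b) {η ζ : E} (h : η ≠ ζ) :
    -a * ‖η - ζ‖ ^ 2 - b * (‖η‖ ^ 2 - ‖ζ‖ ^ 2) ^ 2 / ‖η - ζ‖ ^ 2 ≤
      -(3 * a / 4) * ‖η - ζ‖ ^ 2 - 4 * a * b / (a + 4 * b) * ⟪η, η - ζ⟫ ^ 2 / ‖η - ζ‖ ^ 2 := by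
  set r := ‖η - ζ‖
  set u := ⟪η, η - ζ⟫
  have hr : 0 < r ^ 2 := by have := norm_pos_iff.2 (sub_ne_zero.2 h); positivity
  have hdiff : ‖η‖ ^ 2 - ‖ζ‖ ^ 2 = 2 * u - r ^ 2 := by
    have : ζ = η - (η - ζ) := (sub_sub_cancel η ζ).symm
    rw [this, norm_sub_sq_real]; ring
  -- `4ab/(a + 4b) u²` is the minimum over `s` of `b (2u - s)² + (a/4) s²`
  have key : 4 * a * b / (a + 4 * b) * u ^ 2 ≤ b * (2 * u - r ^ 2) ^ 2 + a / 4 * (r ^ 2) ^ 2 := by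
    rw [div_mul_eq_mul_div, div_le_iff₀ (by positivity)]
    nlinarith [sq_nonneg (8 * b * u - (a + 4 * b) * r ^ 2)]
  have : 4 * a * b / (a + 4 * b) * u ^ 2 / r ^ 2 ≤
      b * (2 * u - r ^ 2) ^ 2 / r ^ 2 + a / 4 * r ^ 2 := by
    calc _ ≤ (b * (2 * u - r ^ 2) ^ 2 + a / 4 * (r ^ 2) ^ 2) / r ^ 2 := by gcongr
      _ = _ := by field_simp
  rw [hdiff]
  linarith

lemma norm_sub_rpow_mul_exp_le_caflischKernel {p p' a b : ℝ} (hp : p ≤ p') (ha : 0 < a) (hb : 0 < b)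
    {η ζ : E} (h : η ≠ ζ) :
    ‖η - ζ‖ ^ p' * exp (-a * ‖η - ζ‖ ^ 2 - b * (‖η‖ ^ 2 - ‖ζ‖ ^ 2) ^ 2 / ‖η - ζ‖ ^ 2) ≤
      exp ((p' - p) ^ 2 / a) * caflischKernel p (a / 2) (4 * a * b / (a + 4 * b)) η (η - ζ) := by
  set r := ‖η - ζ‖
  have hr : 0 < r := norm_pos_iff.2 (sub_ne_zero.2 h)
  have hpow : r ^ p' ≤ exp ((p' - p) ^ 2 / a) * exp (a / 4 * r ^ 2) * r ^ p := by
    have := rpow_le_exp_mul_exp_mul_sq (sub_nonneg.2 hp) (by positivity : 0 < a / 4) hr.le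
    rw [show 4 * (a / 4) = a by ring] at this
    calc r ^ p' = r ^ (p' - p) * r ^ p := by rw [← rpow_add hr]; ring_nf
      _ ≤ _ := by gcongr
  set X := 4 * a * b / (a + 4 * b) * ⟪η, η - ζ⟫ ^ 2 / r ^ 2
  calc r ^ p' * exp (-a * r ^ 2 - b * (‖η‖ ^ 2 - ‖ζ‖ ^ 2) ^ 2 / r ^ 2)
      ≤ exp ((p' - p) ^ 2 / a) * exp (a / 4 * r ^ 2) * r ^ p * exp (-(3 * a / 4) * r ^ 2 - X) :=
        mul_le_mul hpow (exp_le_exp.2 (caflisch_exponent_le ha hb h)) (exp_pos _).le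
          (by positivity)
    _ = exp ((p' - p) ^ 2 / a) * (r ^ p * exp (a / 4 * r ^ 2 + (-(3 * a / 4) * r ^ 2 - X))) := by
        rw [exp_add]; ring
    _ = exp ((p' - p) ^ 2 / a) * (r ^ p * exp (-(a / 2) * r ^ 2 - X)) := by ring_nf
    _ = _ := rfl

end Kernel

section Model

variable {F : Type*} [NormedAddCommGroup F] [InnerProductSpace ℝ F] [FiniteDimensional ℝ F]

lemma finrank_withLp_real_prod : finrank ℝ (WithLp 2 (ℝ × F)) = finrank ℝ F + 1 := by
  rw [(WithLp.linearEquiv 2 ℝ (ℝ × F)).finrank_eq, finrank_prod, finrank_self, add_comm]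

variable [MeasurableSpace F] [BorelSpace F]

lemma lintegral_caflischKernel_toLp_le [Nontrivial F] {p a b c : ℝ} (hp : p < 0)
    (hpF : -(finrank ℝ F : ℝ) < p + 1) (ha : 0 < a) (hb : 0 < b) (hc : 0 < c) :
    ∫⁻ w : WithLp 2 (ℝ × F), ENNReal.ofReal (caflischKernel p a b (toLp 2 (c, 0)) w) ≤
      ENNReal.ofReal ((√(2 * π / b) * (∫ y : F, ‖y‖ ^ (p + 1) * exp (-a * ‖y‖ ^ 2))
        + (1 + (b / 2)⁻¹) * ∫ w : WithLp 2 (ℝ × F), ‖w‖ ^ p * exp (-a * ‖w‖ ^ 2)) / c) := by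
  set g : WithLp 2 (ℝ × F) → ℝ := fun w => ‖w‖ ^ p * exp (-a * ‖w‖ ^ 2)
  set gF : F → ℝ := fun y => ‖y‖ ^ (p + 1) * exp (-a * ‖y‖ ^ 2)
  have hgF : Integrable gF := integrable_norm_rpow_mul_exp_neg_mul_sq volume ha hpF
  have hg : Integrable g := integrable_norm_rpow_mul_exp_neg_mul_sq volume ha (by
    rw [finrank_withLp_real_prod]; push_cast; linarith)
  set G₁ : ℝ × F → ℝ := fun x =>
    ‖x.2‖ ^ p * exp (-a * ‖x.2‖ ^ 2) * exp (-(b * c ^ 2 / (2 * ‖x.2‖ ^ 2)) * x.1 ^ 2)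
  set G₂ : ℝ × F → ℝ := fun x => exp (-(b / 2 * c ^ 2)) * g (toLp 2 x)
  have hG₁ : Measurable G₁ := by fun_prop
  have hsplit : ∀ x, caflischKernel p a b (toLp 2 (c, 0)) (toLp 2 x) ≤ G₁ x + G₂ x := by
    intro x
    rw [caflischKernel_toLp]
    exact rpow_mul_exp_le_add hp ha.le hb.le (norm_nonneg _) (norm_nonneg _)
      (by rw [prod_norm_sq_eq_of_L2]; simp)
  have h₁ : ∫⁻ x, ENNReal.ofReal (G₁ x) ≤ ENNReal.ofReal (√(2 * π / b) / c * ∫ y, gF y) := by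
    rw [Measure.volume_eq_prod, lintegral_prod_symm _ hG₁.ennreal_ofReal.aemeasurable]
    calc ∫⁻ y, ∫⁻ t, ENNReal.ofReal (G₁ (t, y))
        ≤ ∫⁻ y, ENNReal.ofReal (√(2 * π / b) / c * gF y) :=
          lintegral_mono fun y => lintegral_rpow_mul_exp_mul_gaussian_le hp hb hc (norm_nonneg y)
      _ = _ := by
          rw [← ofReal_integral_eq_lintegral_ofReal (hgF.const_mul _)
            (.of_forall fun y => by positivity), integral_const_mul]
  have h₂ : ∫⁻ x, ENNReal.ofReal (G₂ x) =
      ENNReal.ofReal (exp (-(b / 2 * c ^ 2)) * ∫ w, g w) := by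
    rw [(volume_preserving_toLp ℝ F).lintegral_comp
      (f := fun w => ENNReal.ofReal (exp (-(b / 2 * c ^ 2)) * g w)) (by fun_prop),
      ← ofReal_integral_eq_lintegral_ofReal (hg.const_mul _)
        (.of_forall fun y => by positivity), integral_const_mul]
  have hexp := exp_neg_mul_sq_le_div (half_pos hb) hc
  have hg0 : 0 ≤ ∫ w, g w := integral_nonneg fun w => by positivity
  calc ∫⁻ w, ENNReal.ofReal (caflischKernel p a b (toLp 2 (c, 0)) w)
      = ∫⁻ x, ENNReal.ofReal (caflischKernel p a b (toLp 2 (c, 0)) (toLp 2 x)) :=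
        ((volume_preserving_toLp ℝ F).lintegral_comp
          (measurable_caflischKernel p a b _).ennreal_ofReal).symm
    _ ≤ ∫⁻ x, ENNReal.ofReal (G₁ x) + ENNReal.ofReal (G₂ x) :=
        lintegral_mono fun x => (ENNReal.ofReal_le_ofReal (hsplit x)).trans ENNReal.ofReal_add_le
    _ ≤ ENNReal.ofReal (√(2 * π / b) / c * ∫ y, gF y) +
          ENNReal.ofReal (exp (-(b / 2 * c ^ 2)) * ∫ w, g w) := by
        rw [lintegral_add_left hG₁.ennreal_ofReal, h₂]
        gcongr
    _ ≤ _ := by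
        rw [← ENNReal.ofReal_add (by positivity) (by positivity)]
        gcongr
        calc _ ≤ √(2 * π / b) / c * (∫ y, gF y) + (1 + (b / 2)⁻¹) / c * ∫ w, g w := by gcongr
          _ = _ := by ring

end Model

section Decay

variable {E E' : Type*} [NormedAddCommGroup E] [InnerProductSpace ℝ E] [FiniteDimensional ℝ E]
  [NormedAddCommGroup E'] [InnerProductSpace ℝ E'] [FiniteDimensional ℝ E']

lemma exists_linearIsometryEquiv_apply_eq (h : finrank ℝ E = finrank ℝ E') {x : E} {y : E'}
    (hxy : ‖x‖ = ‖y‖) : ∃ L : E ≃ₗᵢ[ℝ] E', L x = y := by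
  let L₀ := (stdOrthonormalBasis ℝ E).equiv (stdOrthonormalBasis ℝ E') (finCongr h)
  exact ⟨L₀.trans (Submodule.reflection (ℝ ∙ (L₀ x - y))ᗮ),
    Submodule.reflection_sub (by rw [L₀.norm_map, hxy])⟩

variable [MeasurableSpace E] [BorelSpace E]

lemma lintegral_caflischKernel_eq [MeasurableSpace E'] [BorelSpace E'] (L : E ≃ₗᵢ[ℝ] E')
    (p a b : ℝ) (η : E) :
    ∫⁻ v, ENNReal.ofReal (caflischKernel p a b η v) =
      ∫⁻ w, ENNReal.ofReal (caflischKernel p a b (L η) w) := by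
  rw [← L.measurePreserving.lintegral_comp (measurable_caflischKernel p a b (L η)).ennreal_ofReal]
  simp only [caflischKernel_map]

theorem exists_lintegral_caflischKernel_le (hE : 2 ≤ finrank ℝ E) {p a b : ℝ} (hp : p < 0)
    (hpE : -(finrank ℝ E : ℝ) < p) (ha : 0 < a) (hb : 0 < b) :
    ∃ C, 0 ≤ C ∧ ∀ η : E,
      ∫⁻ v, ENNReal.ofReal (caflischKernel p a b η v) ≤ ENNReal.ofReal (C * (1 + ‖η‖)⁻¹) := by
  have : Nontrivial E := Module.nontrivial_of_finrank_pos (R := ℝ) (by omega)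
  let F := EuclideanSpace ℝ (Fin (finrank ℝ E - 1))
  have : Nontrivial F := by
    have : Nonempty (Fin (finrank ℝ E - 1)) := ⟨⟨0, by omega⟩⟩
    infer_instance
  have hF : finrank ℝ F + 1 = finrank ℝ E := by simp [F]; omega
  have hpF : -(finrank ℝ F : ℝ) < p + 1 := by
    rw [← hF] at hpE; push_cast at hpE; linarith
  set N := ∫ v : E, ‖v‖ ^ p * exp (-a * ‖v‖ ^ 2)
  set M := √(2 * π / b) * (∫ y : F, ‖y‖ ^ (p + 1) * exp (-a * ‖y‖ ^ 2))
    + (1 + (b / 2)⁻¹) * ∫ w : WithLp 2 (ℝ × F), ‖w‖ ^ p * exp (-a * ‖w‖ ^ 2)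
  have hN : 0 ≤ N := integral_nonneg fun v => by positivity
  have hM : 0 ≤ M := by
    have : 0 ≤ ∫ y : F, ‖y‖ ^ (p + 1) * exp (-a * ‖y‖ ^ 2) := integral_nonneg fun y => by positivity
    have : 0 ≤ ∫ w : WithLp 2 (ℝ × F), ‖w‖ ^ p * exp (-a * ‖w‖ ^ 2) :=
      integral_nonneg fun w => by positivity
    positivity
  have hle_N : ∀ η : E, ∫⁻ v, ENNReal.ofReal (caflischKernel p a b η v) ≤ ENNReal.ofReal N := by
    intro η
    rw [ofReal_integral_eq_lintegral_ofReal (integrable_norm_rpow_mul_exp_neg_mul_sq volume ha hpE)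
      (.of_forall fun v => by positivity)]
    exact lintegral_mono fun v => ENNReal.ofReal_le_ofReal (caflischKernel_le hb.le η v)
  have hle_M : ∀ η : E, η ≠ 0 →
      ∫⁻ v, ENNReal.ofReal (caflischKernel p a b η v) ≤ ENNReal.ofReal (M / ‖η‖) := by
    intro η hη
    obtain ⟨L, hL⟩ := exists_linearIsometryEquiv_apply_eq
      (by rw [finrank_withLp_real_prod, hF]) (x := η) (y := toLp 2 (‖η‖, (0 : F))) (by simp)
    rw [lintegral_caflischKernel_eq L, hL]
    exact lintegral_caflischKernel_toLp_le hp hpF ha hb (norm_pos_iff.2 hη)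
  refine ⟨N + M, by positivity, fun η => ?_⟩
  have hfin := ne_top_of_le_ne_top ENNReal.ofReal_ne_top (hle_N η)
  rw [ENNReal.le_ofReal_iff_toReal_le hfin (by positivity), ← div_eq_mul_inv,
    le_div_iff₀ (by positivity)]
  have h₁ := ENNReal.toReal_le_of_le_ofReal hN (hle_N η)
  rcases eq_or_ne η 0 with rfl | hη
  · simp only [norm_zero, add_zero, mul_one]; linarith
  · have h₂ := ENNReal.toReal_le_of_le_ofReal (by positivity) (hle_M η hη)
    rw [le_div_iff₀ (norm_pos_iff.2 hη)] at h₂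
    nlinarith

end Decay

/-- Caflisch-type decay estimate: for `ε, a₁, a₂ > 0` there is `C`
(depending on `ε, a₁, a₂`) such that for all `η ∈ ℝ³`,
`∫_{ℝ³} |η-ζ|^{ε-3} exp(-a₁|η-ζ|² - a₂(|η|²-|ζ|²)²/|η-ζ|²) dζ ≤ C(1+|η|)⁻¹`. -/
theorem caflisch_kernel_decay
    (ε a₁ a₂ : ℝ) (hε : 0 < ε) (ha₁ : 0 < a₁) (ha₂ : 0 < a₂) :
    ∃ C : ℝ, ∀ η : EuclideanSpace ℝ (Fin 3),
      (∫ ζ : EuclideanSpace ℝ (Fin 3),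
        ‖η - ζ‖ ^ (ε - 3) *
          Real.exp (-a₁ * ‖η - ζ‖ ^ 2 - a₂ * (‖η‖ ^ 2 - ‖ζ‖ ^ 2) ^ 2 / ‖η - ζ‖ ^ 2)) ≤
      C * (1 + ‖η‖)⁻¹ := by
  set p := min ε 1 - 3
  set B := 4 * a₁ * a₂ / (a₁ + 4 * a₂)
  obtain ⟨C, hC, hdecay⟩ := exists_lintegral_caflischKernel_le (E := EuclideanSpace ℝ (Fin 3))
    (by simp) (p := p) (by linarith [min_le_right ε 1]) (by simp [p]; linarith [lt_min hε one_pos])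
    (half_pos ha₁) (b := B) (by positivity)
  refine ⟨exp ((ε - 3 - p) ^ 2 / a₁) * C, fun η => ?_⟩
  rw [integral_eq_lintegral_of_nonneg_ae (.of_forall fun ζ => by positivity) (by fun_prop)]
  refine ENNReal.toReal_le_of_le_ofReal (by positivity) ?_
  calc _ ≤ ∫⁻ ζ, ENNReal.ofReal (exp ((ε - 3 - p) ^ 2 / a₁) *
          caflischKernel p (a₁ / 2) B η (η - ζ)) :=
        lintegral_mono_ae <| (volume.ae_ne η).mono fun ζ hζ => ENNReal.ofReal_le_ofReal <|
          norm_sub_rpow_mul_exp_le_caflischKernel (by simp [p]) ha₁ ha₂ hζ.symm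
    _ = ENNReal.ofReal (exp ((ε - 3 - p) ^ 2 / a₁)) *
          ∫⁻ v, ENNReal.ofReal (caflischKernel p (a₁ / 2) B η v) := by
        simp_rw [ENNReal.ofReal_mul (exp_pos _).le]
        rw [lintegral_const_mul' _ _ ENNReal.ofReal_ne_top,
          (Measure.measurePreserving_sub_left volume η).lintegral_comp
            (measurable_caflischKernel _ _ _ η).ennreal_ofReal]
    _ ≤ ENNReal.ofReal (exp ((ε - 3 - p) ^ 2 / a₁)) * ENNReal.ofReal (C * (1 + ‖η‖)⁻¹) := by
        gcongr; exact hdecay η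
    _ = _ := by rw [← ENNReal.ofReal_mul (exp_pos _).le, mul_assoc]
end

section
/- Let Ω ⊂ ℝ³ be a bounded convex domain with C¹ boundary and let d_x = d(x,∂Ω). Suppose g : Ω → ℝ satisfies |g(z)| ≤ C₀(1 + d_z^{-1})^{1/3+ε'} for all z ∈ Ω, with 0 < ε' and 1/3 + ε' < 1. Then for any x ∈ Ω, ζ ≠ 0, setting l = |x - p(x,ζ)|, we have ∫₀^{τ₋(x,ζ)} e^{-ν(|ζ|)s} g(x - sζ) ds ≤ C(1 + d_x^{-1})^{4/3+ε'}, where ν(|ζ|) ≥ ν₀(1+|ζ|)^γ with ν₀ > 0, 0 ≤ γ ≤ 1, and C depends only on C₀, ν₀, γ, ε', and diam(Ω). -/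
/-!
Write `τ` for the exit time and `d` for the distance from `x` to `∂Ω`. The exit point `p` lies in
`closure Ω`, so by convexity the homothety of ratio `1 - s/τ` centred at `p` maps the ball
`B(x, d) ⊆ Ω` into `Ω`; hence `d_{x - sζ} ≥ (1 - s/τ) d`, and `|g(x - sζ)|` is at most
`C₀ (1 + d⁻¹ τ/(τ - s))^a` with `a = 1/3 + ε' < 1`. Since `ν(|ζ|) ≥ ν₀`, the integrand is dominated
by `e^{-ν₀ s}` times this weight. On `s ≤ τ/2` the weight is `O(1 + d^{-a})`; on `s > τ/2` one has
`e^{-ν₀ s} ≤ e^{-ν₀ τ/2}`, and the integrable singularity `(τ - s)^{-a}` contributes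
`τ e^{-ν₀ τ/2}/(1 - a) ≤ 2/(ν₀(1 - a))`, independently of `τ`.
-/

open Set Set.Notation Metric MeasureTheory intervalIntegral

section WeightedIntegral

lemma integral_exp_neg_mul_le {ν τ : ℝ} (hν : 0 < ν) :
    ∫ s in (0 : ℝ)..τ, Real.exp (-ν * s) ≤ 1 / ν := by
  rw [integral_comp_mul_left (fun s => Real.exp s) (neg_ne_zero.2 hν.ne'), integral_exp]
  have := Real.exp_pos (-ν * τ)
  simp only [mul_zero, Real.exp_zero, smul_eq_mul]
  rw [inv_neg, neg_mul, ← mul_neg, neg_sub, ← div_eq_inv_mul]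
  gcongr
  linarith

lemma intervalIntegrable_sub_rpow_neg {τ a : ℝ} (ha : a < 1) :
    IntervalIntegrable (fun s : ℝ => (τ - s) ^ (-a)) volume 0 τ := by
  simpa using (intervalIntegrable_rpow' (a := τ) (b := 0) (by linarith)).comp_sub_left τ

lemma integral_sub_rpow_neg {τ a : ℝ} (ha : a < 1) :
    ∫ s in (0 : ℝ)..τ, (τ - s) ^ (-a) = τ ^ (1 - a) / (1 - a) := by
  rw [integral_comp_sub_left (fun v : ℝ => v ^ (-a)) τ, sub_self, sub_zero,
    integral_rpow (Or.inl (by linarith)), Real.zero_rpow (by linarith), sub_zero,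
    neg_add_eq_sub]

lemma mul_exp_neg_mul_half_le {ν : ℝ} (hν : 0 < ν) (τ : ℝ) :
    τ * Real.exp (-(ν * (τ / 2))) ≤ 2 / ν := by
  have := Real.add_one_le_exp (ν * (τ / 2))
  rw [Real.exp_neg, ← div_eq_mul_inv, div_le_div_iff₀ (Real.exp_pos _) hν]
  nlinarith

lemma exp_mul_one_add_rpow_le {ν τ D a s : ℝ} (hν : 0 < ν) (hD : 0 ≤ D) (ha0 : 0 ≤ a)
    (ha1 : a ≤ 1) (hs : s ∈ Ioo 0 τ) :
    Real.exp (-ν * s) * (1 + D * τ / (τ - s)) ^ a ≤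
      (1 + 2 * D ^ a) * Real.exp (-ν * s) +
        D ^ a * (τ ^ a * Real.exp (-(ν * (τ / 2)))) * (τ - s) ^ (-a) := by
  obtain ⟨hs0, hsτ⟩ := hs
  have hτ : 0 < τ := hs0.trans hsτ
  have hτs : 0 < τ - s := sub_pos.2 hsτ
  have hexp := (Real.exp_pos (-ν * s)).le
  have hDa := Real.rpow_nonneg hD a
  have hsplit : (1 + D * τ / (τ - s)) ^ a ≤ 1 + D ^ a * (τ / (τ - s)) ^ a := by
    rw [mul_div_assoc, ← Real.mul_rpow hD (by positivity)]
    simpa using Real.rpow_add_le_add_rpow zero_le_one (by positivity) ha0 ha1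
  have hsing : Real.exp (-ν * s) * (τ / (τ - s)) ^ a ≤
      2 * Real.exp (-ν * s) + τ ^ a * Real.exp (-(ν * (τ / 2))) * (τ - s) ^ (-a) := by
    rcases le_or_gt s (τ / 2) with hhalf | hhalf
    · have hratio : (τ / (τ - s)) ^ a ≤ 2 := calc
        (τ / (τ - s)) ^ a ≤ 2 ^ a := by
          gcongr
          rw [div_le_iff₀ hτs]; linarith
        _ ≤ 2 := by simpa using Real.rpow_le_rpow_of_exponent_le one_le_two ha1
      have : 0 ≤ τ ^ a * Real.exp (-(ν * (τ / 2))) * (τ - s) ^ (-a) := by positivity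
      nlinarith
    · have hfar : Real.exp (-ν * s) ≤ Real.exp (-(ν * (τ / 2))) :=
        Real.exp_le_exp.2 (by nlinarith)
      rw [Real.div_rpow hτ.le hτs.le, Real.rpow_neg hτs.le, div_eq_mul_inv]
      have := mul_le_mul_of_nonneg_right hfar (by positivity : 0 ≤ τ ^ a * ((τ - s) ^ a)⁻¹)
      linarith
  calc Real.exp (-ν * s) * (1 + D * τ / (τ - s)) ^ a
      ≤ Real.exp (-ν * s) * (1 + D ^ a * (τ / (τ - s)) ^ a) := by gcongr
    _ = Real.exp (-ν * s) + D ^ a * (Real.exp (-ν * s) * (τ / (τ - s)) ^ a) := by ring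
    _ ≤ Real.exp (-ν * s) +
          D ^ a * (2 * Real.exp (-ν * s) + τ ^ a * Real.exp (-(ν * (τ / 2))) * (τ - s) ^ (-a)) := by
      gcongr
    _ = _ := by ring

theorem integral_le_of_le_mul_exp_mul_one_add_rpow {f : ℝ → ℝ} {K ν τ D a : ℝ} (hK : 0 ≤ K)
    (hν : 0 < ν) (hτ : 0 ≤ τ) (hD : 0 ≤ D) (ha0 : 0 ≤ a) (ha1 : a < 1)
    (hf : ∀ s ∈ Ioo 0 τ, f s ≤ K * (Real.exp (-ν * s) * (1 + D * τ / (τ - s)) ^ a)) :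
    ∫ s in (0 : ℝ)..τ, f s ≤ K * (3 + 2 / (1 - a)) / ν * (1 + D) ^ a := by
  have h1a : 0 < 1 - a := sub_pos.2 ha1
  have hRHS : 0 ≤ K * (3 + 2 / (1 - a)) / ν * (1 + D) ^ a := by positivity
  by_cases hfi : IntervalIntegrable f volume 0 τ
  swap
  · rwa [integral_undef hfi]
  set B := τ ^ a * Real.exp (-(ν * (τ / 2)))
  have hexp : IntervalIntegrable (fun s => Real.exp (-ν * s)) volume 0 τ := by
    apply Continuous.intervalIntegrable; fun_prop
  have hsing := intervalIntegrable_sub_rpow_neg (τ := τ) ha1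
  have hmajorant : ∫ s in (0 : ℝ)..τ, f s ≤
      K * ((1 + 2 * D ^ a) * ∫ s in (0 : ℝ)..τ, Real.exp (-ν * s)) +
        K * (D ^ a * B * ∫ s in (0 : ℝ)..τ, (τ - s) ^ (-a)) := by
    simp only [← intervalIntegral.integral_const_mul]
    rw [← intervalIntegral.integral_add]
    · refine integral_mono_on_of_le_Ioo hτ hfi ?_ fun s hs => (hf s hs).trans ?_
      · exact ((hexp.const_mul _).const_mul _).add ((hsing.const_mul _).const_mul _)
      · rw [← mul_add]
        exact mul_le_mul_of_nonneg_left (exp_mul_one_add_rpow_le hν hD ha0 ha1.le hs) hK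
    · exact (hexp.const_mul _).const_mul _
    · exact (hsing.const_mul _).const_mul _
  have hB : B * ∫ s in (0 : ℝ)..τ, (τ - s) ^ (-a) ≤ 2 / ν / (1 - a) := by
    have hτB : B * τ ^ (1 - a) = τ * Real.exp (-(ν * (τ / 2))) := by
      rw [mul_right_comm, ← Real.rpow_add_of_nonneg hτ ha0 h1a.le, add_sub_cancel,
        Real.rpow_one]
    rw [integral_sub_rpow_neg ha1, mul_div_assoc', hτB]
    gcongr
    exact mul_exp_neg_mul_half_le hν τ
  have hDa : D ^ a ≤ (1 + D) ^ a := by gcongr; linarith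
  have hone : 1 ≤ (1 + D) ^ a := Real.one_le_rpow (by linarith) ha0
  calc ∫ s in (0 : ℝ)..τ, f s
      ≤ K * ((1 + 2 * D ^ a) * (1 / ν)) + K * (D ^ a * (2 / ν / (1 - a))) := by
        refine hmajorant.trans (add_le_add ?_ ?_)
        · gcongr; exact integral_exp_neg_mul_le hν
        · rw [mul_assoc (D ^ a)]; gcongr
    _ = K / ν * (1 + D ^ a * (2 + 2 / (1 - a))) := by field_simp; ring
    _ ≤ K / ν * ((1 + D) ^ a + (1 + D) ^ a * (2 + 2 / (1 - a))) := by gcongr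
    _ = K * (3 + 2 / (1 - a)) / ν * (1 + D) ^ a := by ring

end WeightedIntegral

section ExitTime

variable {E : Type*} [NormedAddCommGroup E] [NormedSpace ℝ E] {Ω : Set E} {x ζ : E}

/-- The backward exit time `τ₋(x, ζ)`; the exit point `p(x, ζ)` is `x - exitTime Ω x ζ • ζ`. -/
noncomputable def exitTime (Ω : Set E) (x ζ : E) : ℝ :=
  sInf {t : ℝ | 0 < t ∧ x - t • ζ ∉ Ω}

lemma exitTimes_nonempty (hbdd : Bornology.IsBounded Ω) (hζ : ζ ≠ 0) :
    {t : ℝ | 0 < t ∧ x - t • ζ ∉ Ω}.Nonempty := by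
  obtain ⟨R, hR⟩ := hbdd.subset_closedBall x
  have hζ' : 0 < ‖ζ‖ := norm_pos_iff.2 hζ
  refine ⟨(|R| + 1) / ‖ζ‖, by positivity, fun hmem => ?_⟩
  have hdist := mem_closedBall.1 (hR hmem)
  rw [dist_eq_norm, sub_sub_cancel_left, norm_neg, norm_smul, Real.norm_of_nonneg (by positivity),
    div_mul_cancel₀ _ hζ'.ne'] at hdist
  linarith [le_abs_self R]

lemma isClosed_exitTimes (hΩ : IsOpen Ω) (hx : x ∈ Ω) :
    IsClosed {t : ℝ | 0 < t ∧ x - t • ζ ∉ Ω} := by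
  have hset : {t : ℝ | 0 < t ∧ x - t • ζ ∉ Ω} = Ici 0 ∩ (fun t : ℝ => x - t • ζ) ⁻¹' Ωᶜ := by
    ext t
    refine and_congr_left fun ht => ⟨le_of_lt, fun ht0 => lt_of_le_of_ne ht0 ?_⟩
    rintro rfl
    simp [hx] at ht
  rw [hset]
  exact isClosed_Ici.inter (hΩ.isClosed_compl.preimage (by fun_prop))

lemma exitTime_mem (hΩ : IsOpen Ω) (hbdd : Bornology.IsBounded Ω) (hx : x ∈ Ω) (hζ : ζ ≠ 0) :
    exitTime Ω x ζ ∈ {t : ℝ | 0 < t ∧ x - t • ζ ∉ Ω} :=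
  (isClosed_exitTimes hΩ hx).csInf_mem (exitTimes_nonempty hbdd hζ) ⟨0, fun _ ht => ht.1.le⟩

lemma sub_smul_mem_of_lt_exitTime (hx : x ∈ Ω) {s : ℝ} (hs0 : 0 ≤ s) (hs : s < exitTime Ω x ζ) :
    x - s • ζ ∈ Ω := by
  rcases hs0.eq_or_lt with rfl | hs0
  · simpa using hx
  by_contra hout
  exact hs.not_ge (csInf_le ⟨0, fun _ ht => ht.1.le⟩ ⟨hs0, hout⟩)

lemma sub_exitTime_smul_mem_frontier (hΩ : IsOpen Ω) (hbdd : Bornology.IsBounded Ω) (hx : x ∈ Ω)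
    (hζ : ζ ≠ 0) : x - exitTime Ω x ζ • ζ ∈ frontier Ω := by
  obtain ⟨hτ, hout⟩ := exitTime_mem hΩ hbdd hx hζ
  rw [hΩ.frontier_eq]
  have hray : Continuous fun t : ℝ => x - t • ζ := by fun_prop
  have hleft := (hray.tendsto (exitTime Ω x ζ)).mono_left
    (nhdsWithin_le_nhds (s := Iio (exitTime Ω x ζ)))
  refine ⟨mem_closure_of_tendsto hleft ?_, hout⟩
  filter_upwards [Ioo_mem_nhdsLT hτ] with s hs
  exact sub_smul_mem_of_lt_exitTime hx hs.1.le hs.2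

end ExitTime

section DistanceToBoundary

lemma infDist_frontier_pos {X : Type*} [PseudoMetricSpace X] {Ω : Set X} {x : X} (hΩ : IsOpen Ω)
    (hx : x ∈ Ω) (hne : (frontier Ω).Nonempty) : 0 < infDist x (frontier Ω) :=
  (isClosed_frontier.notMem_iff_infDist_pos hne).1 fun h => (hΩ.frontier_eq ▸ h).2 hx

variable {E : Type*} [NormedAddCommGroup E] [NormedSpace ℝ E] {Ω : Set E} {x : E}

lemma ball_infDist_frontier_subset (hΩ : IsOpen Ω) (hx : x ∈ Ω) :
    ball x (infDist x (frontier Ω)) ⊆ Ω := by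
  set r := infDist x (frontier Ω)
  rcases le_or_gt r 0 with hr | hr
  · simp [ball_eq_empty.2 hr]
  -- `Ω` is clopen in the connected ball, which misses `frontier Ω`
  have hclopen : IsClopen (ball x r ↓∩ Ω) :=
    isClopen_preimage_val hΩ (disjoint_ball_infDist (s := frontier Ω)).symm
  have : PreconnectedSpace (ball x r) :=
    Subtype.preconnectedSpace (convex_ball x r).isPreconnected
  have huniv := hclopen.eq_univ ⟨⟨x, mem_ball_self hr⟩, hx⟩
  intro y hy
  exact (huniv ▸ mem_univ _ : (⟨y, hy⟩ : ball x r) ∈ ball x r ↓∩ Ω)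

theorem Convex.one_sub_mul_infDist_frontier_le (hconv : Convex ℝ Ω) (hΩ : IsOpen Ω) (hx : x ∈ Ω)
    {q : E} (hq : q ∈ closure Ω) {t : ℝ} (ht0 : 0 ≤ t) (ht1 : t < 1) :
    (1 - t) * infDist x (frontier Ω) ≤ infDist ((1 - t) • x + t • q) (frontier Ω) := by
  rcases (frontier Ω).eq_empty_or_nonempty with hempty | hne
  · simp [hempty]
  have h1t : 0 < 1 - t := sub_pos.2 ht1
  set z := (1 - t) • x + t • q
  refine (le_infDist hne).2 fun w hw => not_lt.1 fun hlt => ?_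
  -- `w` is `(1 - t) • y + t • q` for a point `y` of the ball around `x` inside `Ω`
  set y := x + (1 - t)⁻¹ • (w - z)
  have hy : y ∈ Ω := by
    refine ball_infDist_frontier_subset hΩ hx ?_
    rw [mem_ball, dist_eq_norm, add_sub_cancel_left, norm_smul, Real.norm_of_nonneg
      (inv_nonneg.2 h1t.le), inv_mul_lt_iff₀ h1t, ← dist_eq_norm, dist_comm]
    exact hlt
  have hw_eq : (1 - t) • y + t • q = w := by
    simp only [y, z, smul_add, smul_inv_smul₀ h1t.ne']
    module
  have hwΩ := hconv.combo_interior_closure_mem_interior (hΩ.interior_eq ▸ hy) hq h1t ht0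
    (sub_add_cancel 1 t)
  rw [hw_eq, hΩ.interior_eq] at hwΩ
  exact (hΩ.frontier_eq ▸ hw).2 hwΩ

variable {ζ : E}

theorem Convex.inv_infDist_frontier_sub_smul_le (hconv : Convex ℝ Ω) (hΩ : IsOpen Ω)
    (hbdd : Bornology.IsBounded Ω) (hx : x ∈ Ω) (hζ : ζ ≠ 0) {s : ℝ} (hs0 : 0 ≤ s)
    (hs : s < exitTime Ω x ζ) :
    (infDist (x - s • ζ) (frontier Ω))⁻¹ ≤
      (infDist x (frontier Ω))⁻¹ * exitTime Ω x ζ / (exitTime Ω x ζ - s) := by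
  set τ := exitTime Ω x ζ
  have hp := sub_exitTime_smul_mem_frontier hΩ hbdd hx hζ
  have hτ : 0 < τ := (exitTime_mem hΩ hbdd hx hζ).1
  have hd := infDist_frontier_pos hΩ hx ⟨_, hp⟩
  have hkey := hconv.one_sub_mul_infDist_frontier_le hΩ hx (frontier_subset_closure hp)
    (div_nonneg hs0 hτ.le) ((div_lt_one hτ).2 hs)
  have hray : (1 - s / τ) • x + (s / τ) • (x - τ • ζ) = x - s • ζ := by
    rw [smul_sub, smul_smul, div_mul_cancel₀ _ hτ.ne']
    module
  rw [hray] at hkey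
  have hpos : 0 < (1 - s / τ) * infDist x (frontier Ω) :=
    mul_pos (sub_pos.2 ((div_lt_one hτ).2 hs)) hd
  calc (infDist (x - s • ζ) (frontier Ω))⁻¹ ≤ ((1 - s / τ) * infDist x (frontier Ω))⁻¹ :=
        inv_anti₀ hpos hkey
    _ = (infDist x (frontier Ω))⁻¹ * τ / (τ - s) := by
        have : τ - s ≠ 0 := sub_ne_zero.2 hs.ne'
        field_simp

theorem Convex.exp_mul_apply_sub_smul_le (hconv : Convex ℝ Ω) (hΩ : IsOpen Ω)
    (hbdd : Bornology.IsBounded Ω) (hx : x ∈ Ω) (hζ : ζ ≠ 0) {g : E → ℝ} {C₀ a ν₀ ν : ℝ}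
    (hC₀ : 0 ≤ C₀) (ha : 0 ≤ a) (hν : ν₀ ≤ ν)
    (hg : ∀ z ∈ Ω, |g z| ≤ C₀ * (1 + (infDist z (frontier Ω))⁻¹) ^ a) {s : ℝ}
    (hs : s ∈ Ioo 0 (exitTime Ω x ζ)) :
    Real.exp (-ν * s) * g (x - s • ζ) ≤ C₀ * (Real.exp (-ν₀ * s) *
      (1 + (infDist x (frontier Ω))⁻¹ * exitTime Ω x ζ / (exitTime Ω x ζ - s)) ^ a) := by
  obtain ⟨hs0, hs⟩ := hs
  have hτ : 0 < exitTime Ω x ζ := (exitTime_mem hΩ hbdd hx hζ).1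
  have hτs : 0 < exitTime Ω x ζ - s := sub_pos.2 hs
  have hg' : g (x - s • ζ) ≤
      C₀ * (1 + (infDist x (frontier Ω))⁻¹ * exitTime Ω x ζ / (exitTime Ω x ζ - s)) ^ a := by
    refine (le_abs_self _).trans <| (hg _ (sub_smul_mem_of_lt_exitTime hx hs0.le hs)).trans ?_
    gcongr
    · exact add_nonneg zero_le_one (inv_nonneg.2 infDist_nonneg)
    · exact hconv.inv_infDist_frontier_sub_smul_le hΩ hbdd hx hζ hs0.le hs
  have hexp : Real.exp (-ν * s) ≤ Real.exp (-ν₀ * s) := Real.exp_le_exp.2 (by nlinarith)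
  have hd : 0 ≤ (infDist x (frontier Ω))⁻¹ := inv_nonneg.2 infDist_nonneg
  calc Real.exp (-ν * s) * g (x - s • ζ)
      ≤ Real.exp (-ν * s) *
          (C₀ * (1 + (infDist x (frontier Ω))⁻¹ * exitTime Ω x ζ / (exitTime Ω x ζ - s)) ^ a) :=
        mul_le_mul_of_nonneg_left hg' (Real.exp_pos _).le
    _ ≤ _ := by rw [mul_left_comm]; gcongr

end DistanceToBoundary

theorem exit_ray_weighted_integral_bound_general
    (Ω : Set (EuclideanSpace ℝ (Fin 3)))
    (hopen : IsOpen Ω) (hbdd : Bornology.IsBounded Ω) (hconv : Convex ℝ Ω)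
    (C₀ ν₀ γ ε' : ℝ) (hC₀ : 0 < C₀) (hν₀ : 0 < ν₀)
    (hγ0 : 0 ≤ γ) (hε' : 0 < ε') (hε'1 : 1 / 3 + ε' < 1) :
    ∃ C > 0, ∀ (g : EuclideanSpace ℝ (Fin 3) → ℝ) (ν : ℝ → ℝ),
      (∀ ρ : ℝ, 0 ≤ ρ → ν₀ * (1 + ρ) ^ γ ≤ ν ρ) →
      (∀ z ∈ Ω, |g z| ≤
        C₀ * (1 + (Metric.infDist z (frontier Ω))⁻¹) ^ ((1 : ℝ) / 3 + ε')) →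
      ∀ x ∈ Ω, ∀ ζ : EuclideanSpace ℝ (Fin 3), ζ ≠ 0 →
      ∀ τ : ℝ, τ = sInf {t : ℝ | 0 < t ∧ x - t • ζ ∉ Ω} →
      (∫ s in (0 : ℝ)..τ, Real.exp (-(ν ‖ζ‖) * s) * g (x - s • ζ)) ≤
        C * (1 + (Metric.infDist x (frontier Ω))⁻¹) ^ ((4 : ℝ) / 3 + ε') := by
  set a : ℝ := 1 / 3 + ε'
  have ha0 : 0 ≤ a := by positivity
  have h1a : 0 < 1 - a := sub_pos.2 hε'1
  refine ⟨C₀ * (3 + 2 / (1 - a)) / ν₀, by positivity, ?_⟩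
  rintro g ν hν hg x hx ζ hζ _ rfl
  have hd : 0 ≤ (infDist x (frontier Ω))⁻¹ := inv_nonneg.2 infDist_nonneg
  have hν₀ν : ν₀ ≤ ν ‖ζ‖ := le_trans
    (le_mul_of_one_le_right hν₀.le (Real.one_le_rpow (by simp) hγ0)) (hν ‖ζ‖ (norm_nonneg ζ))
  calc ∫ s in (0 : ℝ)..exitTime Ω x ζ, Real.exp (-(ν ‖ζ‖) * s) * g (x - s • ζ)
      ≤ C₀ * (3 + 2 / (1 - a)) / ν₀ * (1 + (infDist x (frontier Ω))⁻¹) ^ a :=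
        integral_le_of_le_mul_exp_mul_one_add_rpow hC₀.le hν₀
          (exitTime_mem hopen hbdd hx hζ).1.le hd ha0 hε'1
          fun s hs => hconv.exp_mul_apply_sub_smul_le hopen hbdd hx hζ hC₀.le ha0 hν₀ν hg hs
    _ ≤ C₀ * (3 + 2 / (1 - a)) / ν₀ * (1 + (infDist x (frontier Ω))⁻¹) ^ ((4 : ℝ) / 3 + ε') := by
        gcongr
        · exact le_add_of_nonneg_right hd
        · linarith

/-- along the backward ray in a bounded convex domain `Ω ⊂ ℝ³`,
a weight `g` with `|g(z)| ≤ C₀(1 + d_z⁻¹)^{1/3+ε'}` integrated against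
`e^{-ν(|ζ|)s}` up to the exit time `τ₋(x,ζ)` is bounded by
`C(1 + d_x⁻¹)^{4/3+ε'}`, with `C` depending only on `C₀, ν₀, γ, ε'` and `Ω`. -/
theorem exit_ray_weighted_integral_bound
    (Ω : Set (EuclideanSpace ℝ (Fin 3)))
    (hopen : IsOpen Ω) (hbdd : Bornology.IsBounded Ω) (hconv : Convex ℝ Ω)
    (C₀ ν₀ γ ε' : ℝ) (hC₀ : 0 < C₀) (hν₀ : 0 < ν₀)
    (hγ0 : 0 ≤ γ) (hγ1 : γ ≤ 1) (hε' : 0 < ε') (hε'1 : 1 / 3 + ε' < 1) :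
    ∃ C > 0, ∀ (g : EuclideanSpace ℝ (Fin 3) → ℝ) (ν : ℝ → ℝ),
      (∀ ρ : ℝ, 0 ≤ ρ → ν₀ * (1 + ρ) ^ γ ≤ ν ρ) →
      (∀ z ∈ Ω, |g z| ≤
        C₀ * (1 + (Metric.infDist z (frontier Ω))⁻¹) ^ ((1 : ℝ) / 3 + ε')) →
      ∀ x ∈ Ω, ∀ ζ : EuclideanSpace ℝ (Fin 3), ζ ≠ 0 →
      ∀ τ : ℝ, τ = sInf {t : ℝ | 0 < t ∧ x - t • ζ ∉ Ω} →
      (∫ s in (0 : ℝ)..τ, Real.exp (-(ν ‖ζ‖) * s) * g (x - s • ζ)) ≤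
        C * (1 + (Metric.infDist x (frontier Ω))⁻¹) ^ ((4 : ℝ) / 3 + ε') :=
  exit_ray_weighted_integral_bound_general Ω hopen hbdd hconv C₀ ν₀ γ ε' hC₀ hν₀ hγ0 hε' hε'1
end

section
/- Let Ω ⊂ ℝ³ be a bounded convex domain with C¹ boundary and let x ∈ Ω, ζ ≠ 0. Then τ₋(x,ζ) ≥ d_x/(N(x,ζ)|ζ|), and consequently for ν₀ > 0 and 0 < N(x,ζ) ≤ 1, (1/(N(x,ζ)|ζ|)) e^{-ν₀ d_x/(N(x,ζ)|ζ|)} ≤ d_x^{-1}/ν₀. -/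
open scoped RealInnerProductSpace

/-- For a bounded convex domain `Ω ⊂ ℝ³` with `C¹` boundary,
`x ∈ Ω`, `ζ ≠ 0`: `τ₋(x,ζ) ≥ d_x/(N(x,ζ)|ζ|)`, and moreover for `ν₀ > 0`,
`(1/(N(x,ζ)|ζ|)) e^{-ν₀ d_x/(N(x,ζ)|ζ|)} ≤ d_x⁻¹/ν₀`. -/
theorem exit_time_lower_and_exp_bound
    (Ω : Set (EuclideanSpace ℝ (Fin 3)))
    (hopen : IsOpen Ω) (hbdd : Bornology.IsBounded Ω) (hconv : Convex ℝ Ω)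
    (x ζ : EuclideanSpace ℝ (Fin 3)) (hx : x ∈ Ω) (hζ : ζ ≠ 0)
    (τ : ℝ) (hτ : τ = sInf {t : ℝ | 0 < t ∧ x - t • ζ ∉ Ω})
    (X : EuclideanSpace ℝ (Fin 3)) (hX : X = x - τ • ζ) (hXbd : X ∈ frontier Ω)
    (n : EuclideanSpace ℝ (Fin 3)) (hn : ‖n‖ = 1)
    (hsupp : ∀ z ∈ Ω, ⟪z - X, n⟫ ≤ 0)
    (N : ℝ) (hN : N = |⟪n, ζ⟫| / ‖ζ‖) (hNpos : 0 < N) (hNle : N ≤ 1)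
    (ν₀ : ℝ) (hν₀ : 0 < ν₀) :
    Metric.infDist x (frontier Ω) / (N * ‖ζ‖) ≤ τ ∧
    (1 / (N * ‖ζ‖)) * Real.exp (-ν₀ * Metric.infDist x (frontier Ω) / (N * ‖ζ‖)) ≤
      (Metric.infDist x (frontier Ω))⁻¹ / ν₀ := by
  have hζn : ‖ζ‖ ≠ 0 := norm_ne_zero_iff.mpr hζ
  have hapos : 0 < N * ‖ζ‖ := mul_pos hNpos (norm_pos_iff.mpr hζ)
  set d := Metric.infDist x (frontier Ω) with hd
  set c : ℝ := ⟪X - x, n⟫ with hc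
  have hxXn : ⟪x - X, n⟫ ≤ 0 := hsupp x hx
  have hc_eq : c = -⟪x - X, n⟫ := by
    rw [hc, inner_sub_left, inner_sub_left]; ring
  have hc0 : 0 ≤ c := by rw [hc_eq]; linarith
  -- the point x + c • n is not in Ω
  have hy' : x + c • n ∉ Ω := by
    intro hmem
    obtain ⟨r, hrpos, hball⟩ := Metric.isOpen_iff.1 hopen _ hmem
    have hz : x + c • n + (r/2) • n ∈ Ω := by
      apply hball
      rw [Metric.mem_ball, dist_eq_norm]
      have : x + c • n + (r/2) • n - (x + c • n) = (r/2) • n := by abel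
      rw [this, norm_smul, hn, mul_one, Real.norm_eq_abs, abs_of_pos (half_pos hrpos)]
      linarith
    have := hsupp _ hz
    have hnn : ⟪n, n⟫ = (1:ℝ) := by
      rw [real_inner_self_eq_norm_mul_norm, hn]; ring
    have hexp : ⟪x + c • n + (r/2) • n - X, n⟫ = ⟪x - X, n⟫ + c + r/2 := by
      have : x + c • n + (r/2) • n - X = (x - X) + c • n + (r/2) • n := by abel
      rw [this, inner_add_left, inner_add_left, real_inner_smul_left,
        real_inner_smul_left, hnn]
      ring
    rw [hexp] at this
    have : (0:ℝ) < r/2 := half_pos hrpos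
    linarith [hsupp _ hz, hexp ▸ (hsupp _ hz)]
  -- d ≤ c
  have hΩne : Ω ≠ Set.univ := by
    intro h
    exact NormedSpace.unbounded_univ ℝ (EuclideanSpace ℝ (Fin 3)) (h ▸ hbdd)
  obtain ⟨y, hyf, hyd⟩ := exists_mem_frontier_infDist_compl_eq_dist hx hΩne
  have hdc : d ≤ c := by
    calc d ≤ dist x y := Metric.infDist_le_dist_of_mem hyf
      _ = Metric.infDist x Ωᶜ := hyd.symm
      _ ≤ dist x (x + c • n) := Metric.infDist_le_dist_of_mem hy'
      _ = c := by
          rw [dist_eq_norm]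
          have : x - (x + c • n) = (-c) • n := by
            rw [neg_smul]; abel
          rw [this, norm_smul, hn, mul_one, norm_neg, Real.norm_eq_abs,
            abs_of_nonneg hc0]
  -- τ ≥ 0
  have hτ0 : 0 ≤ τ := by
    rw [hτ]
    exact Real.sInf_nonneg (fun t ht => le_of_lt ht.1)
  -- c = τ * (N * ‖ζ‖)
  have hNζ : N * ‖ζ‖ = |⟪ζ, n⟫| := by
    rw [hN, div_mul_cancel₀ _ hζn, real_inner_comm]
  have hcval : c = τ * (N * ‖ζ‖) := by
    have h1 : c = -(τ * ⟪ζ, n⟫) := by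
      rw [hc, hX]
      have : x - τ • ζ - x = -(τ • ζ) := by abel
      rw [this, inner_neg_left, real_inner_smul_left]
    have h2 : c = |c| := (abs_of_nonneg hc0).symm
    rw [h2, h1, abs_neg, abs_mul, abs_of_nonneg hτ0, hNζ]
  have part1 : d / (N * ‖ζ‖) ≤ τ := by
    rw [div_le_iff₀ hapos]
    linarith [hcval ▸ hdc]
  refine ⟨part1, ?_⟩
  -- d > 0
  have hdpos : 0 < d := by
    rw [hd, ← isClosed_frontier.notMem_iff_infDist_pos ⟨X, hXbd⟩]
    exact fun h => disjoint_interior_frontier.ne_of_mem (hopen.interior_eq.symm ▸ hx : x ∈ interior Ω) h rfl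
  set a := N * ‖ζ‖ with ha
  have hs : 0 < ν₀ * d / a := by positivity
  have hexp_le : Real.exp (-(ν₀ * d / a)) ≤ (ν₀ * d / a)⁻¹ := by
    rw [Real.exp_neg]
    exact inv_anti₀ hs (by linarith [Real.add_one_le_exp (ν₀ * d / a)])
  have hrw : -ν₀ * d / a = -(ν₀ * d / a) := by ring
  calc (1 / a) * Real.exp (-ν₀ * d / a)
      ≤ (1 / a) * (ν₀ * d / a)⁻¹ := by
        rw [hrw]
        exact mul_le_mul_of_nonneg_left hexp_le (by positivity)
    _ = d⁻¹ / ν₀ := by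
        field_simp
end
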